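/- arXiv:2405.06142 — 6 statements merged into one kernel-verified Lean document; each statement's English description precedes it below -/
import Mathlib

section
/- Let n, m be positive integers and let A be a symmetric n×n matrix over F₂ with zero diagonal in which every row has Hamming weight exactly m (the adjacency matrix of an m-regular graph G). Assume that for every nonzero x ∈ F₂ⁿ the pair (x, xA) has symplectic weight at least m+1 (i.e., the graph state |G⟩ is m-uniform). Let C ⊆ F₂ⁿ be an F₂-linear subspace in which every nonzero codeword has Hamming weight strictly greater than m(m+1). Then for every x ∈ F₂ⁿ and every c ∈ C with (x, xA + c) ≠ (0,0), the symplectic weight of (x, xA + c) is at least m+1. -/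
open Matrix

/-- The symplectic weight of a pair of binary vectors: the number of coordinates
where at least one of the two vectors is nonzero. -/
def sympWeight {V : Type*} [Fintype V] (x z : V → ZMod 2) : ℕ :=
  (Finset.univ.filter fun j => x j ≠ 0 ∨ z j ≠ 0).card

/-- The Hamming weight of a binary vector. -/
def hWeight {V : Type*} [Fintype V] (x : V → ZMod 2) : ℕ :=
  (Finset.univ.filter fun j => x j ≠ 0).card

lemma hW_le_symp_left {V : Type*} [Fintype V] (x z : V → ZMod 2) :
    hWeight x ≤ sympWeight x z :=
  Finset.card_le_card (by
    intro j hj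
    simp only [hWeight, Finset.mem_filter, Finset.mem_univ, true_and] at hj
    simp [sympWeight, hj])

lemma hW_le_symp_right {V : Type*} [Fintype V] (x z : V → ZMod 2) :
    hWeight z ≤ sympWeight x z :=
  Finset.card_le_card (by
    intro j hj
    simp only [hWeight, Finset.mem_filter, Finset.mem_univ, true_and] at hj
    simp [sympWeight, hj])

lemma hW_add_le {V : Type*} [Fintype V] (u v : V → ZMod 2) :
    hWeight (u + v) ≤ hWeight u + hWeight v := by
  classical
  refine (Finset.card_le_card ?_).trans (Finset.card_union_le _ _)
  intro j hj
  simp only [hWeight, Finset.mem_filter, Finset.mem_union, Finset.mem_univ, true_and,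
    Pi.add_apply] at hj ⊢
  by_contra h
  push_neg at h
  rw [h.1, h.2] at hj
  simp at hj

theorem stmt_0 (n m : ℕ) (hn : 0 < n) (hm : 0 < m)
    (A : Matrix (Fin n) (Fin n) (ZMod 2))
    (hsymm : A.IsSymm) (hdiag : ∀ i, A i i = 0)
    (hreg : ∀ i, hWeight (fun j => A i j) = m)
    (hunif : ∀ x : Fin n → ZMod 2, x ≠ 0 →
      m + 1 ≤ sympWeight x (Matrix.vecMul x A))
    (C : Submodule (ZMod 2) (Fin n → ZMod 2))
    (hC : ∀ c ∈ C, c ≠ 0 → m * (m + 1) < hWeight c) :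
    ∀ x : Fin n → ZMod 2, ∀ c ∈ C,
      ¬(x = 0 ∧ Matrix.vecMul x A + c = 0) →
      m + 1 ≤ sympWeight x (Matrix.vecMul x A + c) := by
  classical
  intro x c hcC hne
  by_cases hc0 : c = 0
  · subst hc0
    have hx : x ≠ 0 := by
      intro hx0
      exact hne ⟨hx0, by simp [hx0]⟩
    simpa using hunif x hx
  · by_cases hx : m + 1 ≤ hWeight x
    · exact hx.trans (hW_le_symp_left _ _)
    · push_neg at hx
      have hxm : hWeight x ≤ m := Nat.lt_succ_iff.mp hx
      -- weight of xA ≤ hWeight x * m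
      have hvm : hWeight (Matrix.vecMul x A) ≤ hWeight x * m := by
        have hsub : (Finset.univ.filter fun j => Matrix.vecMul x A j ≠ 0) ⊆
            (Finset.univ.filter fun i => x i ≠ 0).biUnion
              (fun i => Finset.univ.filter fun j => A i j ≠ 0) := by
          intro j hj
          simp only [Finset.mem_filter, Finset.mem_univ, true_and] at hj
          have : ∃ i, x i * A i j ≠ 0 := by
            by_contra h
            push_neg at h
            apply hj
            simp [Matrix.vecMul, dotProduct, h]
          obtain ⟨i, hi⟩ := this
          simp only [Finset.mem_biUnion, Finset.mem_filter, Finset.mem_univ, true_and]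
          exact ⟨i, fun h0 => hi (by simp [h0]), fun h0 => hi (by simp [h0])⟩
        calc hWeight (Matrix.vecMul x A) ≤ _ := Finset.card_le_card hsub
          _ ≤ ∑ i ∈ Finset.univ.filter (fun i => x i ≠ 0),
              (Finset.univ.filter fun j => A i j ≠ 0).card := Finset.card_biUnion_le
          _ = ∑ i ∈ Finset.univ.filter (fun i => x i ≠ 0), m := by
              refine Finset.sum_congr rfl fun i _ => ?_
              simpa [hWeight] using hreg i
          _ = hWeight x * m := by simp [hWeight, mul_comm]
      have hcw : m * (m + 1) < hWeight c := hC c hcC hc0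
      have key : m + 1 ≤ hWeight (Matrix.vecMul x A + c) := by
        have h1 : hWeight c ≤ hWeight (Matrix.vecMul x A) + hWeight (Matrix.vecMul x A + c) := by
          have : c = Matrix.vecMul x A + (Matrix.vecMul x A + c) := by
            ext j
            simp only [Pi.add_apply]
            rw [← add_assoc, CharTwo.add_self_eq_zero, zero_add]
          calc hWeight c = hWeight (Matrix.vecMul x A + (Matrix.vecMul x A + c)) := by rw [← this]
            _ ≤ _ := hW_add_le _ _
        have hvmm : hWeight (Matrix.vecMul x A) ≤ m * m :=
          hvm.trans (Nat.mul_le_mul_right m hxm)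
        have hsq : m * (m + 1) = m * m + m := by ring
        omega
      exact key.trans (hW_le_symp_right _ _)
end

section
/- Let D ≥ 1 and let n₁, …, n_D be integers with n_i ≥ 8 for all i. Let A be the adjacency matrix over F₂ of the graph Λ_{n₁,…,n_D} on vertex set (ℤ/n₁ℤ) × ⋯ × (ℤ/n_Dℤ), where two vertices are adjacent iff they differ in exactly one coordinate and in that coordinate differ by ±1. Then for every nonzero x ∈ F₂^V (V the vertex set), the pair (x, xA) has symplectic weight at least 2D+1. -/
open Matrix

open scoped Classical in
/-- Adjacency matrix (over F₂) of the D-dimensional rectangular lattice with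
periodic boundary conditions: vertices are adjacent iff they agree in all
coordinates except one, where they differ by ±1 (i.e., Lee distance 1). -/
noncomputable def latticeMatrix {D : ℕ} (n : Fin D → ℕ) [∀ i, NeZero (n i)] :
    Matrix (∀ i, ZMod (n i)) (∀ i, ZMod (n i)) (ZMod 2) :=
  fun x y =>
    if ∃ i, (y i = x i + 1 ∨ y i = x i - 1) ∧ ∀ j, j ≠ i → y j = x j then 1 else 0

set_option linter.unusedSectionVars false
set_option linter.unusedVariables false

open Finset

variable {m : ℕ}

lemma zmod_natCast_ne_zero (hm : 8 ≤ m) {k : ℕ} (h1 : 0 < k) (h2 : k < 8) :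
    ((k : ℕ) : ZMod m) ≠ 0 := by
  intro h
  rw [ZMod.natCast_eq_zero_iff] at h
  have := Nat.le_of_dvd h1 h
  omega

lemma zmod_shift_ne (hm : 8 ≤ m) (x : ZMod m) {a b : ℕ} (ha : a < 8) (hb : b < 8)
    (hab : a ≠ b) : x + (a : ℕ) ≠ x + (b : ℕ) := by
  intro h
  have h2 : ((a : ℕ) : ZMod m) = ((b : ℕ) : ZMod m) := add_left_cancel h
  rcases Nat.lt_or_ge a b with hl | hl
  · have : ((b - a : ℕ) : ZMod m) = 0 := by
      push_cast [Nat.cast_sub hl.le]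
      rw [← h2]; ring
    exact zmod_natCast_ne_zero hm (by omega) (by omega) this
  · have hl' : b < a := by omega
    have : ((a - b : ℕ) : ZMod m) = 0 := by
      push_cast [Nat.cast_sub hl'.le]
      rw [h2]; ring
    exact zmod_natCast_ne_zero hm (by omega) (by omega) this

lemma zmod_shift_ne_sub (hm : 8 ≤ m) (x : ZMod m) {a b : ℕ} (ha : a < 8) (hb : b < 8)
    (hab : a ≠ b) : x - (a : ℕ) ≠ x - (b : ℕ) := by
  intro h
  apply zmod_shift_ne hm (x - (a:ℕ) - (b:ℕ)) ha hb hab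
  rw [show x - (a:ℕ) - (b:ℕ) + (a:ℕ) = x - (b:ℕ) by ring,
    show x - (a:ℕ) - (b:ℕ) + (b:ℕ) = x - (a:ℕ) by ring]
  exact h.symm

section withNeZero
variable [NeZero m]

lemma sum2_le (f : ZMod m → ℕ) {a b : ZMod m} (h1 : a ≠ b) :
    f a + f b ≤ ∑ x, f x := by
  have e : f a + f b = ∑ x ∈ ({a, b} : Finset (ZMod m)), f x := by
    rw [Finset.sum_insert (by simp [h1]), Finset.sum_singleton]
  rw [e]; exact Finset.sum_le_sum_of_subset (Finset.subset_univ _)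

lemma sum3_le (f : ZMod m → ℕ) {a b c : ZMod m} (h1 : a ≠ b) (h2 : a ≠ c) (h3 : b ≠ c) :
    f a + f b + f c ≤ ∑ x, f x := by
  have e : f a + f b + f c = ∑ x ∈ ({a, b, c} : Finset (ZMod m)), f x := by
    rw [Finset.sum_insert (by simp [h1, h2]), Finset.sum_insert (by simp [h3]),
      Finset.sum_singleton]
    ring
  rw [e]; exact Finset.sum_le_sum_of_subset (Finset.subset_univ _)

lemma sum4_le (f : ZMod m → ℕ) {a b c d : ZMod m} (h1 : a ≠ b) (h2 : a ≠ c) (h3 : a ≠ d)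
    (h4 : b ≠ c) (h5 : b ≠ d) (h6 : c ≠ d) :
    f a + f b + f c + f d ≤ ∑ x, f x := by
  have e : f a + f b + f c + f d = ∑ x ∈ ({a, b, c, d} : Finset (ZMod m)), f x := by
    rw [Finset.sum_insert (by simp [h1, h2, h3]), Finset.sum_insert (by simp [h4, h5]),
      Finset.sum_insert (by simp [h6]), Finset.sum_singleton]
    ring
  rw [e]; exact Finset.sum_le_sum_of_subset (Finset.subset_univ _)

lemma sum5_le (f : ZMod m → ℕ) {a b c d e : ZMod m} (h1 : a ≠ b) (h2 : a ≠ c) (h3 : a ≠ d)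
    (h4 : a ≠ e) (h5 : b ≠ c) (h6 : b ≠ d) (h7 : b ≠ e) (h8 : c ≠ d) (h9 : c ≠ e)
    (h10 : d ≠ e) :
    f a + f b + f c + f d + f e ≤ ∑ x, f x := by
  have he : f a + f b + f c + f d + f e = ∑ x ∈ ({a, b, c, d, e} : Finset (ZMod m)), f x := by
    rw [Finset.sum_insert (by simp [h1, h2, h3, h4]), Finset.sum_insert (by simp [h5, h6, h7]),
      Finset.sum_insert (by simp [h8, h9]), Finset.sum_insert (by simp [h10]),
      Finset.sum_singleton]
    ring
  rw [he]; exact Finset.sum_le_sum_of_subset (Finset.subset_univ _)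

end withNeZero

theorem abstract_cycle [NeZero m] (D : ℕ) (hm : 8 ≤ m) (hD : 1 ≤ D) (t w : ZMod m → ℕ)
    (H1 : ∀ a b c : ZMod m, a + 1 = b → b + 1 = c → 1 ≤ w b → 2*D ≤ t b + w a + w c + 1)
    (H2 : ∀ c, w c ≤ t c)
    (H3 : ∀ a b c : ZMod m, a + 1 = b → b + 1 = c → w b = 0 → w c = 0 → w a ≤ t b)
    (H3' : ∀ a b c : ZMod m, a + 1 = b → b + 1 = c → w b = 0 → w a = 0 → w c ≤ t b)
    (hω : 1 ≤ ∑ c, w c) :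
    2*D + 1 ≤ ∑ c, t c := by
  have htw : ∑ c, w c ≤ ∑ c, t c := Finset.sum_le_sum (fun c _ => H2 c)
  by_cases h0 : 2*D + 1 ≤ ∑ c, w c
  · omega
  push_neg at h0
  have hω2D : ∑ c, w c ≤ 2*D := by omega
  -- Case I : isolated occupied slice
  by_cases hiso : ∃ v : ZMod m, 1 ≤ w v ∧ w (v+1) = 0 ∧ w (v+2) = 0 ∧ w (v-1) = 0 ∧ w (v-2) = 0
  · obtain ⟨v, hv, hp1, hp2, hm1, hm2⟩ := hiso
    have ht : 2*D ≤ t v + w (v-1) + w (v+1) + 1 := H1 (v-1) v (v+1) (by ring) rfl hv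
    have ha : w v ≤ t (v-1) := H3' (v-2) (v-1) v (by ring) (by ring) hm1 hm2
    have hb : w v ≤ t (v+1) := H3 v (v+1) (v+2) rfl (by ring) hp1 hp2
    have d1 : v - 1 ≠ v := by
      have := zmod_shift_ne_sub hm v (a := 1) (b := 0) (by norm_num) (by norm_num) (by norm_num)
      simpa using this
    have d2 : v - 1 ≠ v + 1 := by
      intro h
      apply zmod_natCast_ne_zero hm (k := 2) (by norm_num) (by norm_num)
      push_cast
      linear_combination -h
    have d3 : v ≠ v + 1 := by
      intro h
      apply zmod_natCast_ne_zero hm (k := 1) (by norm_num) (by norm_num)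
      push_cast
      linear_combination -h
    have hsum : t (v-1) + t v + t (v+1) ≤ ∑ c, t c := sum3_le t d1 d2 d3
    omega
  push_neg at hiso
  -- Case II : full support
  by_cases hfull : ∀ c : ZMod m, 1 ≤ w c
  · have key : ∑ c : ZMod m, 2*D ≤ ∑ c : ZMod m, (t c + w (c-1) + w (c+1) + 1) :=
      Finset.sum_le_sum (fun c _ => H1 (c-1) c (c+1) (by ring) rfl (hfull c))
    have e0 : ∑ _c : ZMod m, 2*D = m * (2*D) := by
      rw [Finset.sum_const, Finset.card_univ, ZMod.card, smul_eq_mul]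
    have e1 : ∑ c : ZMod m, (t c + w (c-1) + w (c+1) + 1)
        = (∑ c, t c) + (∑ c : ZMod m, w (c-1)) + (∑ c : ZMod m, w (c+1)) + m := by
      rw [Finset.sum_add_distrib, Finset.sum_add_distrib, Finset.sum_add_distrib]
      rw [Finset.sum_const, Finset.card_univ, ZMod.card, smul_eq_mul, mul_one]
    have e2 : ∑ c : ZMod m, w (c-1) = ∑ c, w c :=
      Fintype.sum_bijective _ (Equiv.subRight (1 : ZMod m)).bijective _ _ (fun c => rfl)
    have e3 : ∑ c : ZMod m, w (c+1) = ∑ c, w c :=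
      Fintype.sum_bijective _ (Equiv.addRight (1 : ZMod m)).bijective _ _ (fun c => rfl)
    rw [e0, e1, e2, e3] at key
    have e4 : m * (2*D) = m*(2*D-1) + m := by rw [← Nat.mul_succ]; congr 1; omega
    set P := m * (2*D-1) with hP
    have e5 : 8*(2*D-1) ≤ P := Nat.mul_le_mul_right _ hm
    omega
  push_neg at hfull
  obtain ⟨c₀, hc₀⟩ := hfull
  have hc₀' : w c₀ = 0 := by omega
  set C : Finset (ZMod m) := univ.filter (fun c => 1 ≤ w c) with hC
  have hCmem : ∀ z : ZMod m, z ∈ C ↔ 1 ≤ w z := by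
    intro z; simp [hC]
  have hCcard : C.card ≤ ∑ c, w c := by
    calc C.card = ∑ _c ∈ C, 1 := by rw [Finset.sum_const, smul_eq_mul, mul_one]
    _ ≤ ∑ c ∈ C, w c := Finset.sum_le_sum (fun c hc => (hCmem c).1 hc)
    _ ≤ ∑ c, w c := Finset.sum_le_sum_of_subset (Finset.subset_univ _)
  have hCne : ∃ z, z ∈ C := by
    by_contra hno
    push_neg at hno
    have : ∀ c, w c = 0 := by
      intro c
      by_contra hc
      exact hno c ((hCmem c).2 (by omega))
    have : ∑ c, w c = 0 := Finset.sum_eq_zero (fun c _ => this c)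
    omega
  by_cases hbig : 4 ≤ C.card
  · obtain ⟨z₀, hz₀⟩ := hCne
    -- shifted sums bounds
    have keyP : (∑ c ∈ C, w (c+1)) + 1 ≤ ∑ c, w c := by
      have himg : ∑ c ∈ C, w (c+1) = ∑ y ∈ C.image (· + 1), w y :=
        (Finset.sum_image (fun a _ b _ h => by exact add_right_cancel h)).symm
      have hex : ∃ x ∈ C, x ∉ C.image (· + 1) := by
        by_contra hno
        push_neg at hno
        have hsubset : C ⊆ C.image (· + 1) := fun x hx => hno x hx
        have heq : C = C.image (· + 1) :=
          Finset.eq_of_subset_of_card_le hsubset Finset.card_image_le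
        have hcl : ∀ z, z ∈ C → z + 1 ∈ C := by
          intro z hz
          rw [heq]
          exact Finset.mem_image_of_mem _ hz
        have hk : ∀ k : ℕ, z₀ + (k : ℕ) ∈ C := by
          intro k
          induction k with
          | zero => simpa using hz₀
          | succ k ih =>
            have := hcl _ ih
            have e : z₀ + ((k+1 : ℕ) : ZMod m) = (z₀ + (k : ℕ)) + 1 := by push_cast; ring
            rw [e]; exact this
        have hmem : c₀ ∈ C := by
          have := hk ((c₀ - z₀).val)
          rwa [ZMod.natCast_rightInverse (c₀ - z₀), add_sub_cancel] at this
        rw [hCmem] at hmem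
        omega
      obtain ⟨x₁, hx₁C, hx₁n⟩ := hex
      have hle : ∑ y ∈ C.image (· + 1), w y + w x₁ ≤ ∑ c, w c := by
        have e : ∑ y ∈ insert x₁ (C.image (· + 1)), w y
            = w x₁ + ∑ y ∈ C.image (· + 1), w y := Finset.sum_insert hx₁n
        calc ∑ y ∈ C.image (· + 1), w y + w x₁
            = ∑ y ∈ insert x₁ (C.image (· + 1)), w y := by rw [e]; ring
          _ ≤ ∑ c, w c := Finset.sum_le_sum_of_subset (Finset.subset_univ _)
      have hwx₁ : 1 ≤ w x₁ := (hCmem x₁).1 hx₁C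
      omega
    have keyM : (∑ c ∈ C, w (c-1)) + 1 ≤ ∑ c, w c := by
      have himg : ∑ c ∈ C, w (c-1) = ∑ y ∈ C.image (· - 1), w y :=
        (Finset.sum_image (fun a _ b _ h => by
          have : a - 1 + 1 = b - 1 + 1 := by rw [h]
          simpa using this)).symm
      have hex : ∃ x ∈ C, x ∉ C.image (· - 1) := by
        by_contra hno
        push_neg at hno
        have hsubset : C ⊆ C.image (· - 1) := fun x hx => hno x hx
        have heq : C = C.image (· - 1) :=
          Finset.eq_of_subset_of_card_le hsubset Finset.card_image_le
        have hcl : ∀ z, z ∈ C → z - 1 ∈ C := by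
          intro z hz
          rw [heq]
          exact Finset.mem_image_of_mem _ hz
        have hk : ∀ k : ℕ, z₀ - (k : ℕ) ∈ C := by
          intro k
          induction k with
          | zero => simpa using hz₀
          | succ k ih =>
            have := hcl _ ih
            have e : z₀ - ((k+1 : ℕ) : ZMod m) = (z₀ - (k : ℕ)) - 1 := by push_cast; ring
            rw [e]; exact this
        have hmem : c₀ ∈ C := by
          have := hk ((z₀ - c₀).val)
          rwa [ZMod.natCast_rightInverse (z₀ - c₀), sub_sub_cancel] at this
        rw [hCmem] at hmem
        omega
      obtain ⟨x₁, hx₁C, hx₁n⟩ := hex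
      have hle : ∑ y ∈ C.image (· - 1), w y + w x₁ ≤ ∑ c, w c := by
        have e : ∑ y ∈ insert x₁ (C.image (· - 1)), w y
            = w x₁ + ∑ y ∈ C.image (· - 1), w y := Finset.sum_insert hx₁n
        calc ∑ y ∈ C.image (· - 1), w y + w x₁
            = ∑ y ∈ insert x₁ (C.image (· - 1)), w y := by rw [e]; ring
          _ ≤ ∑ c, w c := Finset.sum_le_sum_of_subset (Finset.subset_univ _)
      have hwx₁ : 1 ≤ w x₁ := (hCmem x₁).1 hx₁C
      omega
    have key : ∑ _c ∈ C, 2*D ≤ ∑ c ∈ C, (t c + w (c-1) + w (c+1) + 1) :=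
      Finset.sum_le_sum (fun c hc => H1 (c-1) c (c+1) (by ring) rfl ((hCmem c).1 hc))
    have e0 : ∑ _c ∈ C, 2*D = C.card * (2*D) := by
      rw [Finset.sum_const, smul_eq_mul]
    have e1 : ∑ c ∈ C, (t c + w (c-1) + w (c+1) + 1)
        = (∑ c ∈ C, t c) + (∑ c ∈ C, w (c-1)) + (∑ c ∈ C, w (c+1)) + C.card := by
      rw [Finset.sum_add_distrib, Finset.sum_add_distrib, Finset.sum_add_distrib]
      rw [Finset.sum_const, smul_eq_mul, mul_one]
    rw [e0, e1] at key
    have htC : ∑ c ∈ C, t c ≤ ∑ c, t c := Finset.sum_le_sum_of_subset (Finset.subset_univ _)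
    have e4 : C.card * (2*D) = C.card * (2*D-1) + C.card := by
      rw [← Nat.mul_succ]; congr 1; omega
    have e5 : 4*(2*D-1) ≤ C.card*(2*D-1) := Nat.mul_le_mul_right _ hbig
    set P := C.card * (2*D-1) with hP
    set Q := C.card * (2*D) with hQ
    omega
  · obtain ⟨z₀, hz₀⟩ := hCne
    push_neg at hbig
    have hc4 : ∀ q1 q2 q3 q4 : ZMod m, q1 ≠ q2 → q1 ≠ q3 → q1 ≠ q4 → q2 ≠ q3 → q2 ≠ q4 →
        q3 ≠ q4 → 1 ≤ w q1 → 1 ≤ w q2 → 1 ≤ w q3 → 1 ≤ w q4 → False := by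
      intro q1 q2 q3 q4 d1 d2 d3 d4 d5 d6 h1 h2 h3 h4
      have hsub : ({q1, q2, q3, q4} : Finset (ZMod m)) ⊆ C := by
        intro z hz
        simp only [mem_insert, mem_singleton] at hz
        rcases hz with rfl | rfl | rfl | rfl <;> rw [hCmem] <;> assumption
      have hcard : ({q1, q2, q3, q4} : Finset (ZMod m)).card = 4 := by
        rw [Finset.card_insert_of_notMem (by simp [d1, d2, d3]),
          Finset.card_insert_of_notMem (by simp [d4, d5]),
          Finset.card_insert_of_notMem (by simp [d6]), Finset.card_singleton]
      have := Finset.card_le_card hsub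
      omega
    have hz₀w : 1 ≤ w z₀ := (hCmem z₀).1 hz₀
    -- bottom extraction
    have hbot : ∃ x : ZMod m, 1 ≤ w x ∧ w (x - 1) = 0 ∧ w (x - 2) = 0 := by
      by_contra hno
      push_neg at hno
      have step : ∀ x : ZMod m, 1 ≤ w x → (1 ≤ w (x-1) ∨ 1 ≤ w (x-2)) := by
        intro x hx
        by_cases h1 : w (x-1) = 0
        · right
          have := hno x hx h1
          omega
        · left; omega
      set Q : ℕ → ZMod m := fun k => z₀ - (k : ℕ) with hQ
      have hQe1 : ∀ k : ℕ, Q k - 1 = Q (k+1) := by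
        intro k; simp only [hQ]; push_cast; ring
      have hQe2 : ∀ k : ℕ, Q k - 2 = Q (k+2) := by
        intro k; simp only [hQ]; push_cast; ring
      have stepQ : ∀ k : ℕ, 1 ≤ w (Q k) → (1 ≤ w (Q (k+1)) ∨ 1 ≤ w (Q (k+2))) := by
        intro k hk
        rcases step (Q k) hk with h | h
        · left; rwa [hQe1] at h
        · right; rwa [hQe2] at h
      have dQ : ∀ {a b : ℕ}, a < 8 → b < 8 → a ≠ b → Q a ≠ Q b := by
        intro a b ha hb hab
        exact zmod_shift_ne_sub hm z₀ ha hb hab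
      have hQ0 : 1 ≤ w (Q 0) := by
        have : Q 0 = z₀ := by simp [hQ]
        rwa [this]
      have finish : ∀ k1 k2 k3 : ℕ, 0 < k1 → k1 < k2 → k2 < k3 → k3 < 8 →
          1 ≤ w (Q k1) → 1 ≤ w (Q k2) → 1 ≤ w (Q k3) → False := by
        intro k1 k2 k3 a1 a2 a3 a4 b1 b2 b3
        exact hc4 (Q 0) (Q k1) (Q k2) (Q k3)
          (dQ (by omega) (by omega) (by omega)) (dQ (by omega) (by omega) (by omega))
          (dQ (by omega) (by omega) (by omega)) (dQ (by omega) (by omega) (by omega))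
          (dQ (by omega) (by omega) (by omega)) (dQ (by omega) (by omega) (by omega))
          hQ0 b1 b2 b3
      rcases stepQ 0 hQ0 with h1 | h1
      · rcases stepQ 1 h1 with h2 | h2
        · rcases stepQ 2 h2 with h3 | h3
          · exact finish 1 2 3 (by omega) (by omega) (by omega) (by omega) h1 h2 h3
          · exact finish 1 2 4 (by omega) (by omega) (by omega) (by omega) h1 h2 h3
        · rcases stepQ 3 h2 with h3 | h3
          · exact finish 1 3 4 (by omega) (by omega) (by omega) (by omega) h1 h2 h3
          · exact finish 1 3 5 (by omega) (by omega) (by omega) (by omega) h1 h2 h3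
      · rcases stepQ 2 h1 with h2 | h2
        · rcases stepQ 3 h2 with h3 | h3
          · exact finish 2 3 4 (by omega) (by omega) (by omega) (by omega) h1 h2 h3
          · exact finish 2 3 5 (by omega) (by omega) (by omega) (by omega) h1 h2 h3
        · rcases stepQ 4 h2 with h3 | h3
          · exact finish 2 4 5 (by omega) (by omega) (by omega) (by omega) h1 h2 h3
          · exact finish 2 4 6 (by omega) (by omega) (by omega) (by omega) h1 h2 h3
    obtain ⟨x, hxw, hxm1, hxm2⟩ := hbot
    set P : ℕ → ZMod m := fun k => (x - 2) + (k : ℕ) with hP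
    have dP : ∀ {a b : ℕ}, a < 8 → b < 8 → a ≠ b → P a ≠ P b := by
      intro a b ha hb hab
      exact zmod_shift_ne hm (x - 2) ha hb hab
    have hPe : ∀ k : ℕ, P k + 1 = P (k+1) := by
      intro k; simp only [hP]; push_cast; ring
    have eP2 : P 2 = x := by simp only [hP]; push_cast; ring
    have eP1 : P 1 = x - 1 := by simp only [hP]; push_cast; ring
    have eP0 : P 0 = x - 2 := by simp only [hP]; push_cast; ring
    have hw2 : 1 ≤ w (P 2) := by rwa [eP2]
    have hw1 : w (P 1) = 0 := by rwa [eP1]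
    have hw0 : w (P 0) = 0 := by rwa [eP0]
    -- noiso at P 2 : not both P3 P4 empty
    have hno34 : ¬ (w (P 3) = 0 ∧ w (P 4) = 0) := by
      rintro ⟨h3, h4⟩
      refine hiso (P 2) hw2 ?_ ?_ ?_ ?_
      · rwa [show (P 2) + 1 = P 3 from hPe 2]
      · rwa [show (P 2) + 2 = P 4 by simp only [hP]; push_cast; ring]
      · rwa [show (P 2) - 1 = P 1 by simp only [hP]; push_cast; ring]
      · rw [show (P 2) - 2 = P 0 by simp only [hP]; push_cast; ring]
        omega
    by_cases hA : 1 ≤ w (P 3)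
    · by_cases hA1 : 1 ≤ w (P 4)
      · -- run3 : P2 P3 P4
        have h5 : w (P 5) = 0 := by
          by_contra hq
          exact hc4 (P 2) (P 3) (P 4) (P 5)
            (dP (by omega) (by omega) (by omega)) (dP (by omega) (by omega) (by omega))
            (dP (by omega) (by omega) (by omega)) (dP (by omega) (by omega) (by omega))
            (dP (by omega) (by omega) (by omega)) (dP (by omega) (by omega) (by omega))
            hw2 hA hA1 (by omega)
        have h6 : w (P 6) = 0 := by
          by_contra hq
          exact hc4 (P 2) (P 3) (P 4) (P 6)
            (dP (by omega) (by omega) (by omega)) (dP (by omega) (by omega) (by omega))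
            (dP (by omega) (by omega) (by omega)) (dP (by omega) (by omega) (by omega))
            (dP (by omega) (by omega) (by omega)) (dP (by omega) (by omega) (by omega))
            hw2 hA hA1 (by omega)
        have t1 : w (P 2) ≤ t (P 1) := H3' (P 0) (P 1) (P 2) (hPe 0) (hPe 1) hw1 hw0
        have t2 : 2*D ≤ t (P 2) + w (P 1) + w (P 3) + 1 := H1 (P 1) (P 2) (P 3) (hPe 1) (hPe 2) hw2
        have t3 : 2*D ≤ t (P 3) + w (P 2) + w (P 4) + 1 := H1 (P 2) (P 3) (P 4) (hPe 2) (hPe 3) hA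
        have t4 : 2*D ≤ t (P 4) + w (P 3) + w (P 5) + 1 := H1 (P 3) (P 4) (P 5) (hPe 3) (hPe 4) hA1
        have t5 : w (P 4) ≤ t (P 5) := H3 (P 4) (P 5) (P 6) (hPe 4) (hPe 5) h5 h6
        have hsum : t (P 1) + t (P 2) + t (P 3) + t (P 4) + t (P 5) ≤ ∑ c, t c :=
          sum5_le t (dP (by omega) (by omega) (by omega)) (dP (by omega) (by omega) (by omega))
            (dP (by omega) (by omega) (by omega)) (dP (by omega) (by omega) (by omega))
            (dP (by omega) (by omega) (by omega)) (dP (by omega) (by omega) (by omega))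
            (dP (by omega) (by omega) (by omega)) (dP (by omega) (by omega) (by omega))
            (dP (by omega) (by omega) (by omega)) (dP (by omega) (by omega) (by omega))
        have hwsum : w (P 2) + w (P 3) + w (P 4) ≤ ∑ c, w c :=
          sum3_le w (dP (by omega) (by omega) (by omega)) (dP (by omega) (by omega) (by omega))
            (dP (by omega) (by omega) (by omega))
        omega
      · -- w P4 = 0
        have h4 : w (P 4) = 0 := by omega
        by_cases hA2 : 1 ≤ w (P 5)
        · -- pattern (1,2) : P2 P3 P5
          have h6 : w (P 6) = 0 := by
            by_contra hq
            exact hc4 (P 2) (P 3) (P 5) (P 6)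
              (dP (by omega) (by omega) (by omega)) (dP (by omega) (by omega) (by omega))
              (dP (by omega) (by omega) (by omega)) (dP (by omega) (by omega) (by omega))
              (dP (by omega) (by omega) (by omega)) (dP (by omega) (by omega) (by omega))
              hw2 hA hA2 (by omega)
          have h7 : w (P 7) = 0 := by
            by_contra hq
            exact hc4 (P 2) (P 3) (P 5) (P 7)
              (dP (by omega) (by omega) (by omega)) (dP (by omega) (by omega) (by omega))
              (dP (by omega) (by omega) (by omega)) (dP (by omega) (by omega) (by omega))
              (dP (by omega) (by omega) (by omega)) (dP (by omega) (by omega) (by omega))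
              hw2 hA hA2 (by omega)
          have t1 : w (P 2) ≤ t (P 1) := H3' (P 0) (P 1) (P 2) (hPe 0) (hPe 1) hw1 hw0
          have t2 : 2*D ≤ t (P 2) + w (P 1) + w (P 3) + 1 :=
            H1 (P 1) (P 2) (P 3) (hPe 1) (hPe 2) hw2
          have t3 : 2*D ≤ t (P 3) + w (P 2) + w (P 4) + 1 :=
            H1 (P 2) (P 3) (P 4) (hPe 2) (hPe 3) hA
          have t4 : 2*D ≤ t (P 5) + w (P 4) + w (P 6) + 1 :=
            H1 (P 4) (P 5) (P 6) (hPe 4) (hPe 5) hA2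
          have t5 : w (P 5) ≤ t (P 6) := H3 (P 5) (P 6) (P 7) (hPe 5) (hPe 6) h6 h7
          have hsum : t (P 1) + t (P 2) + t (P 3) + t (P 5) + t (P 6) ≤ ∑ c, t c :=
            sum5_le t (dP (by omega) (by omega) (by omega)) (dP (by omega) (by omega) (by omega))
              (dP (by omega) (by omega) (by omega)) (dP (by omega) (by omega) (by omega))
              (dP (by omega) (by omega) (by omega)) (dP (by omega) (by omega) (by omega))
              (dP (by omega) (by omega) (by omega)) (dP (by omega) (by omega) (by omega))
              (dP (by omega) (by omega) (by omega)) (dP (by omega) (by omega) (by omega))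
          have hwsum : w (P 2) + w (P 3) + w (P 5) ≤ ∑ c, w c :=
            sum3_le w (dP (by omega) (by omega) (by omega)) (dP (by omega) (by omega) (by omega))
              (dP (by omega) (by omega) (by omega))
          omega
        · -- ADJ : P2 P3
          have h5 : w (P 5) = 0 := by omega
          have t1 : w (P 2) ≤ t (P 1) := H3' (P 0) (P 1) (P 2) (hPe 0) (hPe 1) hw1 hw0
          have t2 : 2*D ≤ t (P 2) + w (P 1) + w (P 3) + 1 :=
            H1 (P 1) (P 2) (P 3) (hPe 1) (hPe 2) hw2
          have t3 : 2*D ≤ t (P 3) + w (P 2) + w (P 4) + 1 :=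
            H1 (P 2) (P 3) (P 4) (hPe 2) (hPe 3) hA
          have t4 : w (P 3) ≤ t (P 4) := H3 (P 3) (P 4) (P 5) (hPe 3) (hPe 4) h4 h5
          have t5 : w (P 2) ≤ t (P 2) := H2 _
          have t6 : w (P 3) ≤ t (P 3) := H2 _
          have hsum : t (P 1) + t (P 2) + t (P 3) + t (P 4) ≤ ∑ c, t c :=
            sum4_le t (dP (by omega) (by omega) (by omega)) (dP (by omega) (by omega) (by omega))
              (dP (by omega) (by omega) (by omega)) (dP (by omega) (by omega) (by omega))
              (dP (by omega) (by omega) (by omega)) (dP (by omega) (by omega) (by omega))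
          have hwsum : w (P 2) + w (P 3) ≤ ∑ c, w c :=
            sum2_le w (dP (by omega) (by omega) (by omega))
          omega
    · -- w P3 = 0
      have h3 : w (P 3) = 0 := by omega
      have hB : 1 ≤ w (P 4) := by
        rcases Nat.eq_zero_or_pos (w (P 4)) with h | h
        · exact absurd ⟨h3, h⟩ hno34
        · omega
      by_cases hB1 : 1 ≤ w (P 5)
      · -- pattern (2,1) : P2 P4 P5
        have h6 : w (P 6) = 0 := by
          by_contra hq
          exact hc4 (P 2) (P 4) (P 5) (P 6)
            (dP (by omega) (by omega) (by omega)) (dP (by omega) (by omega) (by omega))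
            (dP (by omega) (by omega) (by omega)) (dP (by omega) (by omega) (by omega))
            (dP (by omega) (by omega) (by omega)) (dP (by omega) (by omega) (by omega))
            hw2 hB hB1 (by omega)
        have h7 : w (P 7) = 0 := by
          by_contra hq
          exact hc4 (P 2) (P 4) (P 5) (P 7)
            (dP (by omega) (by omega) (by omega)) (dP (by omega) (by omega) (by omega))
            (dP (by omega) (by omega) (by omega)) (dP (by omega) (by omega) (by omega))
            (dP (by omega) (by omega) (by omega)) (dP (by omega) (by omega) (by omega))
            hw2 hB hB1 (by omega)
        have t1 : w (P 2) ≤ t (P 1) := H3' (P 0) (P 1) (P 2) (hPe 0) (hPe 1) hw1 hw0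
        have t2 : 2*D ≤ t (P 2) + w (P 1) + w (P 3) + 1 :=
          H1 (P 1) (P 2) (P 3) (hPe 1) (hPe 2) hw2
        have t3 : 2*D ≤ t (P 4) + w (P 3) + w (P 5) + 1 :=
          H1 (P 3) (P 4) (P 5) (hPe 3) (hPe 4) hB
        have t4 : 2*D ≤ t (P 5) + w (P 4) + w (P 6) + 1 :=
          H1 (P 4) (P 5) (P 6) (hPe 4) (hPe 5) hB1
        have t5 : w (P 5) ≤ t (P 6) := H3 (P 5) (P 6) (P 7) (hPe 5) (hPe 6) h6 h7
        have hsum : t (P 1) + t (P 2) + t (P 4) + t (P 5) + t (P 6) ≤ ∑ c, t c :=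
          sum5_le t (dP (by omega) (by omega) (by omega)) (dP (by omega) (by omega) (by omega))
            (dP (by omega) (by omega) (by omega)) (dP (by omega) (by omega) (by omega))
            (dP (by omega) (by omega) (by omega)) (dP (by omega) (by omega) (by omega))
            (dP (by omega) (by omega) (by omega)) (dP (by omega) (by omega) (by omega))
            (dP (by omega) (by omega) (by omega)) (dP (by omega) (by omega) (by omega))
        have hwsum : w (P 2) + w (P 4) + w (P 5) ≤ ∑ c, w c :=
          sum3_le w (dP (by omega) (by omega) (by omega)) (dP (by omega) (by omega) (by omega))
            (dP (by omega) (by omega) (by omega))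
        omega
      · have h5 : w (P 5) = 0 := by omega
        by_cases hB2 : 1 ≤ w (P 6)
        · -- pattern (2,2) : P2 P4 P6
          have h7 : w (P 7) = 0 := by
            by_contra hq
            exact hc4 (P 2) (P 4) (P 6) (P 7)
              (dP (by omega) (by omega) (by omega)) (dP (by omega) (by omega) (by omega))
              (dP (by omega) (by omega) (by omega)) (dP (by omega) (by omega) (by omega))
              (dP (by omega) (by omega) (by omega)) (dP (by omega) (by omega) (by omega))
              hw2 hB hB2 (by omega)
          have t2 : 2*D ≤ t (P 2) + w (P 1) + w (P 3) + 1 :=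
            H1 (P 1) (P 2) (P 3) (hPe 1) (hPe 2) hw2
          have t3 : 2*D ≤ t (P 4) + w (P 3) + w (P 5) + 1 :=
            H1 (P 3) (P 4) (P 5) (hPe 3) (hPe 4) hB
          have t4 : 2*D ≤ t (P 6) + w (P 5) + w (P 7) + 1 :=
            H1 (P 5) (P 6) (P 7) (hPe 5) (hPe 6) hB2
          have hsum : t (P 2) + t (P 4) + t (P 6) ≤ ∑ c, t c :=
            sum3_le t (dP (by omega) (by omega) (by omega)) (dP (by omega) (by omega) (by omega))
              (dP (by omega) (by omega) (by omega))
          omega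
        · -- GAP2 : P2 P4
          have h6 : w (P 6) = 0 := by omega
          have t1 : w (P 2) ≤ t (P 1) := H3' (P 0) (P 1) (P 2) (hPe 0) (hPe 1) hw1 hw0
          have t2 : 2*D ≤ t (P 2) + w (P 1) + w (P 3) + 1 :=
            H1 (P 1) (P 2) (P 3) (hPe 1) (hPe 2) hw2
          have t3 : 2*D ≤ t (P 4) + w (P 3) + w (P 5) + 1 :=
            H1 (P 3) (P 4) (P 5) (hPe 3) (hPe 4) hB
          have t4 : w (P 4) ≤ t (P 5) := H3 (P 4) (P 5) (P 6) (hPe 4) (hPe 5) h5 h6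
          have hsum : t (P 1) + t (P 2) + t (P 4) + t (P 5) ≤ ∑ c, t c :=
            sum4_le t (dP (by omega) (by omega) (by omega)) (dP (by omega) (by omega) (by omega))
              (dP (by omega) (by omega) (by omega)) (dP (by omega) (by omega) (by omega))
              (dP (by omega) (by omega) (by omega)) (dP (by omega) (by omega) (by omega))
          omega

section Torus
variable {ι : Type} [DecidableEq ι] [Fintype ι]

def zf (n : ι → ℕ) (f : (∀ i, ZMod (n i)) → ZMod 2) (p : ∀ i, ZMod (n i)) : ZMod 2 :=
  ∑ i, (f (p + Pi.single i 1) + f (p - Pi.single i 1))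

def TS (n : ι → ℕ) [∀ i, NeZero (n i)] (f : (∀ i, ZMod (n i)) → ZMod 2) :
    Finset (∀ i, ZMod (n i)) :=
  Finset.univ.filter (fun p => f p ≠ 0 ∨ zf n f p ≠ 0)

variable (n : ι → ℕ) [∀ i, NeZero (n i)] (d : ι)

def sl (c : ZMod (n d)) (g : ∀ j : {j // j ≠ d}, ZMod (n j.1)) : ∀ i, ZMod (n i) :=
  (Equiv.piSplitAt d (fun i => ZMod (n i))).symm (c, g)

lemma sl_apply_d (c : ZMod (n d)) (g : ∀ j : {j // j ≠ d}, ZMod (n j.1)) :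
    sl n d c g d = c := by
  simp [sl, Equiv.piSplitAt_symm_apply]

lemma sl_apply_ne (c : ZMod (n d)) (g : ∀ j : {j // j ≠ d}, ZMod (n j.1)) (j : ι)
    (hj : j ≠ d) : sl n d c g j = g ⟨j, hj⟩ := by
  simp [sl, Equiv.piSplitAt_symm_apply, hj]

lemma sl_add_d (c : ZMod (n d)) (g : ∀ j : {j // j ≠ d}, ZMod (n j.1)) :
    sl n d c g + Pi.single d 1 = sl n d (c + 1) g := by
  funext j
  by_cases hj : j = d
  · subst hj
    rw [Pi.add_apply, sl_apply_d, sl_apply_d, Pi.single_eq_same]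
  · rw [Pi.add_apply, sl_apply_ne n d c g j hj, sl_apply_ne n d (c+1) g j hj,
      Pi.single_eq_of_ne hj, add_zero]

lemma sl_sub_d (c : ZMod (n d)) (g : ∀ j : {j // j ≠ d}, ZMod (n j.1)) :
    sl n d c g - Pi.single d 1 = sl n d (c - 1) g := by
  funext j
  by_cases hj : j = d
  · subst hj
    rw [Pi.sub_apply, sl_apply_d, sl_apply_d, Pi.single_eq_same]
  · rw [Pi.sub_apply, sl_apply_ne n d c g j hj, sl_apply_ne n d (c-1) g j hj,
      Pi.single_eq_of_ne hj, sub_zero]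

lemma sl_add_ne (c : ZMod (n d)) (g : ∀ j : {j // j ≠ d}, ZMod (n j.1)) (i : {j // j ≠ d}) :
    sl n d c g + Pi.single i.1 1 = sl n d c (g + Pi.single i 1) := by
  funext j
  by_cases hj : j = d
  · subst hj
    rw [Pi.add_apply, sl_apply_d, sl_apply_d, Pi.single_eq_of_ne (Ne.symm i.2), add_zero]
  · rw [Pi.add_apply, sl_apply_ne n d c g j hj, sl_apply_ne n d c _ j hj, Pi.add_apply]
    congr 1
    by_cases hji : (⟨j, hj⟩ : {j // j ≠ d}) = i
    · subst hji
      simp [Pi.single_eq_same]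
    · have hji' : j ≠ i.1 := fun h => hji (Subtype.ext h)
      rw [Pi.single_eq_of_ne hji', Pi.single_eq_of_ne hji]

lemma sl_sub_ne (c : ZMod (n d)) (g : ∀ j : {j // j ≠ d}, ZMod (n j.1)) (i : {j // j ≠ d}) :
    sl n d c g - Pi.single i.1 1 = sl n d c (g - Pi.single i 1) := by
  funext j
  by_cases hj : j = d
  · subst hj
    rw [Pi.sub_apply, sl_apply_d, sl_apply_d, Pi.single_eq_of_ne (Ne.symm i.2), sub_zero]
  · rw [Pi.sub_apply, sl_apply_ne n d c g j hj, sl_apply_ne n d c _ j hj, Pi.sub_apply]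
    congr 1
    by_cases hji : (⟨j, hj⟩ : {j // j ≠ d}) = i
    · subst hji
      simp [Pi.single_eq_same]
    · have hji' : j ≠ i.1 := fun h => hji (Subtype.ext h)
      rw [Pi.single_eq_of_ne hji', Pi.single_eq_of_ne hji]

def slc (f : (∀ i, ZMod (n i)) → ZMod 2) (c : ZMod (n d))
    (g : ∀ j : {j // j ≠ d}, ZMod (n j.1)) : ZMod 2 :=
  f (sl n d c g)

lemma zf_slice (f : (∀ i, ZMod (n i)) → ZMod 2) (c : ZMod (n d))
    (g : ∀ j : {j // j ≠ d}, ZMod (n j.1)) :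
    zf n f (sl n d c g)
      = zf (fun j : {j // j ≠ d} => n j.1) (slc n d f c) g
        + slc n d f (c - 1) g + slc n d f (c + 1) g := by
  unfold zf
  rw [← Finset.add_sum_erase _ _ (Finset.mem_univ d)]
  have hsub : ∑ x ∈ univ.erase d,
      (f (sl n d c g + Pi.single x 1) + f (sl n d c g - Pi.single x 1))
      = ∑ i : {j // j ≠ d},
        (f (sl n d c g + Pi.single i.1 1) + f (sl n d c g - Pi.single i.1 1)) :=
    Finset.sum_subtype _ (by intro x; simp) _
  rw [hsub]
  rw [sl_add_d, sl_sub_d]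
  have : ∀ i : {j // j ≠ d},
      f (sl n d c g + Pi.single i.1 1) + f (sl n d c g - Pi.single i.1 1)
        = slc n d f c (g + Pi.single i 1) + slc n d f c (g - Pi.single i 1) := by
    intro i
    rw [sl_add_ne, sl_sub_ne]
    rfl
  rw [Finset.sum_congr rfl (fun i _ => this i)]
  unfold slc
  abel


lemma sl_eq (p : ∀ i, ZMod (n i)) :
    sl n d (p d) ((Equiv.piSplitAt d (fun i => ZMod (n i)) p).2) = p := by
  unfold sl
  have h : ((p d), (Equiv.piSplitAt d (fun i => ZMod (n i)) p).2)
      = Equiv.piSplitAt d (fun i => ZMod (n i)) p := by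
    refine Prod.ext ?_ rfl
    simp [Equiv.piSplitAt_apply]
  rw [h, Equiv.symm_apply_apply]

lemma sl_coord (c : ZMod (n d)) (g : ∀ j : {j // j ≠ d}, ZMod (n j.1)) :
    (sl n d c g) d = c := by
  simp [sl, Equiv.piSplitAt_symm_apply]

lemma sl_snd (c : ZMod (n d)) (g : ∀ j : {j // j ≠ d}, ZMod (n j.1)) :
    (Equiv.piSplitAt d (fun i => ZMod (n i)) (sl n d c g)).2 = g := by
  unfold sl
  rw [Equiv.apply_symm_apply]

lemma fiber_card (P : (∀ i, ZMod (n i)) → Prop) [DecidablePred P] :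
    (univ.filter P).card
      = ∑ c : ZMod (n d),
        (univ.filter (fun g : ∀ j : {j // j ≠ d}, ZMod (n j.1) => P (sl n d c g))).card := by
  rw [Finset.card_eq_sum_card_fiberwise
    (f := fun p : ∀ i, ZMod (n i) => p d) (t := univ) (fun p _ => Finset.mem_univ (p d))]
  refine Finset.sum_congr rfl (fun c _ => ?_)
  refine Finset.card_bij' (fun p _ => (Equiv.piSplitAt d (fun i => ZMod (n i)) p).2)
    (fun g _ => sl n d c g) ?_ ?_ ?_ ?_
  · intro p hp
    simp only [Finset.mem_filter, Finset.mem_univ, true_and] at hp ⊢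
    obtain ⟨hp1, hp2⟩ := hp
    rw [← hp2, sl_eq]
    exact hp1
  · intro g hg
    simp only [Finset.mem_filter, Finset.mem_univ, true_and] at hg ⊢
    exact ⟨hg, sl_coord n d c g⟩
  · intro p hp
    simp only [Finset.mem_filter, Finset.mem_univ, true_and] at hp
    obtain ⟨hp1, hp2⟩ := hp
    subst hp2
    exact sl_eq n d p
  · intro g hg
    exact sl_snd n d c g

end Torus


noncomputable section Main

theorem torus_main : ∀ (N : ℕ) (ι : Type) [DecidableEq ι] [Fintype ι] (n : ι → ℕ),
    (∀ i, 8 ≤ n i) → Fintype.card ι = N → ∀ [∀ i, NeZero (n i)]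
    (f : (∀ i, ZMod (n i)) → ZMod 2), f ≠ 0 → 2 * N + 1 ≤ (TS n f).card := by
  intro N
  induction N using Nat.strong_induction_on with
  | _ N IH =>
  intro ι _ _ n hn hcard _ f hf
  obtain ⟨p₀, hp₀⟩ := Function.ne_iff.mp hf
  rcases N with _ | M
  · have : p₀ ∈ TS n f := Finset.mem_filter.mpr ⟨Finset.mem_univ _, Or.inl hp₀⟩
    have := Finset.card_pos.mpr ⟨p₀, this⟩
    omega
  -- inductive step
  have hNe : Nonempty ι := Fintype.card_pos_iff.mp (by omega)
  obtain ⟨d⟩ := hNe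
  haveI hNZ : ∀ j : {j : ι // j ≠ d}, NeZero (n j.1) := fun j => inferInstance
  have hn' : ∀ j : {j : ι // j ≠ d}, 8 ≤ n j.1 := fun j => hn j.1
  have hκ : Fintype.card {j : ι // j ≠ d} = M := by
    have h1 : Fintype.card {j : ι // ¬ (j = d)}
        = Fintype.card ι - Fintype.card {j : ι // j = d} := Fintype.card_subtype_compl _
    have h2 : Fintype.card {j : ι // j = d} = 1 := Fintype.card_subtype_eq d
    simp only [ne_eq]
    omega
  have hm : 8 ≤ n d := hn d
  -- slice finsets
  set Tf : ZMod (n d) → Finset (∀ j : {j : ι // j ≠ d}, ZMod (n j.1)) := fun c =>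
    univ.filter (fun g => slc n d f c g ≠ 0 ∨
      (zf (fun j : {j : ι // j ≠ d} => n j.1) (slc n d f c) g
        + slc n d f (c-1) g + slc n d f (c+1) g) ≠ 0) with hTf
  set Wf : ZMod (n d) → Finset (∀ j : {j : ι // j ≠ d}, ZMod (n j.1)) := fun c =>
    univ.filter (fun g => slc n d f c g ≠ 0) with hWf
  -- total card identities
  have hT : (TS n f).card = ∑ c, (Tf c).card := by
    unfold TS
    rw [fiber_card n d]
    refine Finset.sum_congr rfl (fun c _ => ?_)
    congr 1
    refine Finset.filter_congr (fun g _ => ?_)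
    rw [zf_slice n d f c g]
    exact Iff.rfl
  have hWtot : (univ.filter (fun p => f p ≠ 0)).card = ∑ c, (Wf c).card := by
    rw [fiber_card n d (fun p => f p ≠ 0)]
    exact Finset.sum_congr rfl (fun c _ => rfl)
  -- basic slice lemmas
  have hzero : ∀ c : ZMod (n d), (Wf c).card = 0 → ∀ g, slc n d f c g = 0 := by
    intro c hc g
    by_contra hg
    have : g ∈ Wf c := Finset.mem_filter.mpr ⟨Finset.mem_univ _, hg⟩
    have := Finset.card_pos.mpr ⟨g, this⟩
    omega
  have hzf0 : ∀ c : ZMod (n d), (∀ g, slc n d f c g = 0) →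
      ∀ g, zf (fun j : {j : ι // j ≠ d} => n j.1) (slc n d f c) g = 0 := by
    intro c hc g
    unfold zf
    rw [Finset.sum_congr rfl (fun i _ => by rw [hc, hc, add_zero])]
    exact Finset.sum_const_zero
  -- abstract hypotheses
  have hH2 : ∀ c, (Wf c).card ≤ (Tf c).card := by
    intro c
    apply Finset.card_le_card
    exact Finset.monotone_filter_right _ (fun g _ hg => Or.inl hg)
  have hH3 : ∀ a b c : ZMod (n d), a + 1 = b → b + 1 = c → (Wf b).card = 0 →
      (Wf c).card = 0 → (Wf a).card ≤ (Tf b).card := by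
    intro a b c h1 h2 hb hc
    have ha : a = b - 1 := by rw [← h1]; ring
    have hc' : c = b + 1 := h2.symm
    subst ha hc'
    apply Finset.card_le_card
    intro g hg
    have hg' : slc n d f (b-1) g ≠ 0 := (Finset.mem_filter.mp hg).2
    refine Finset.mem_filter.mpr ⟨Finset.mem_univ _, Or.inr ?_⟩
    rw [hzf0 b (hzero b hb) g, hzero (b+1) hc g]
    simpa using hg'
  have hH3' : ∀ a b c : ZMod (n d), a + 1 = b → b + 1 = c → (Wf b).card = 0 →
      (Wf a).card = 0 → (Wf c).card ≤ (Tf b).card := by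
    intro a b c h1 h2 hb ha
    have ha' : a = b - 1 := by rw [← h1]; ring
    have hc' : c = b + 1 := h2.symm
    subst ha' hc'
    apply Finset.card_le_card
    intro g hg
    have hg' : slc n d f (b+1) g ≠ 0 := (Finset.mem_filter.mp hg).2
    refine Finset.mem_filter.mpr ⟨Finset.mem_univ _, Or.inr ?_⟩
    rw [hzf0 b (hzero b hb) g, hzero (b-1) ha g]
    simpa using hg'
  have hH1 : ∀ a b c : ZMod (n d), a + 1 = b → b + 1 = c → 1 ≤ (Wf b).card →
      2*(M+1) ≤ (Tf b).card + (Wf a).card + (Wf c).card + 1 := by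
    intro a b c h1 h2 hb
    have ha : a = b - 1 := by rw [← h1]; ring
    have hc' : c = b + 1 := h2.symm
    subst ha hc'
    obtain ⟨g₀, hg₀⟩ := Finset.card_pos.mp (by omega : 0 < (Wf b).card)
    have hne : slc n d f b ≠ 0 :=
      Function.ne_iff.mpr ⟨g₀, (Finset.mem_filter.mp hg₀).2⟩
    have hIH := IH M (by omega) {j : ι // j ≠ d} (fun j => n j.1) hn' hκ (slc n d f b) hne
    have hsub : TS (fun j : {j : ι // j ≠ d} => n j.1) (slc n d f b)
        ⊆ (Tf b ∪ Wf (b-1)) ∪ Wf (b+1) := by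
      intro g hg
      rcases Finset.mem_filter.mp hg with ⟨_, hg2 | hg2⟩
      · exact Finset.mem_union_left _ (Finset.mem_union_left _
          (Finset.mem_filter.mpr ⟨Finset.mem_univ _, Or.inl hg2⟩))
      · by_cases hm1 : slc n d f (b-1) g ≠ 0
        · exact Finset.mem_union_left _ (Finset.mem_union_right _
            (Finset.mem_filter.mpr ⟨Finset.mem_univ _, hm1⟩))
        by_cases hp1 : slc n d f (b+1) g ≠ 0
        · exact Finset.mem_union_right _ (Finset.mem_filter.mpr ⟨Finset.mem_univ _, hp1⟩)
        push_neg at hm1 hp1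
        refine Finset.mem_union_left _ (Finset.mem_union_left _
          (Finset.mem_filter.mpr ⟨Finset.mem_univ _, Or.inr ?_⟩))
        rw [hm1, hp1]
        simpa using hg2
    have hcard := Finset.card_le_card hsub
    have hcard2 := Finset.card_union_le (Tf b ∪ Wf (b-1)) (Wf (b+1))
    have hcard3 := Finset.card_union_le (Tf b) (Wf (b-1))
    omega
  have hω : 1 ≤ ∑ c, (Wf c).card := by
    rw [← hWtot]
    have : p₀ ∈ univ.filter (fun p => f p ≠ 0) :=
      Finset.mem_filter.mpr ⟨Finset.mem_univ _, hp₀⟩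
    have := Finset.card_pos.mpr ⟨p₀, this⟩
    omega
  have habs := abstract_cycle (m := n d) (M+1) hm (by omega)
    (fun c => (Tf c).card) (fun c => (Wf c).card) hH1 hH2 hH3 hH3' hω
  rw [hT]
  exact habs


lemma vecMul_lattice (D : ℕ) (n : Fin D → ℕ) (hn : ∀ i, 8 ≤ n i) [∀ i, NeZero (n i)]
    (x : (∀ i, ZMod (n i)) → ZMod 2) :
    Matrix.vecMul x (latticeMatrix n) = zf n x := by
  funext j
  classical
  have hone : ∀ i : Fin D, (1 : ZMod (n i)) ≠ 0 := by
    intro i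
    have h : ((1:ℕ) : ZMod (n i)) ≠ 0 := by
      intro h
      rw [ZMod.natCast_eq_zero_iff] at h
      have := Nat.le_of_dvd (by norm_num) h
      have := hn i
      omega
    simpa using h
  have htwo : ∀ i : Fin D, (2 : ZMod (n i)) ≠ 0 := by
    intro i
    have h : ((2:ℕ) : ZMod (n i)) ≠ 0 := by
      intro h
      rw [ZMod.natCast_eq_zero_iff] at h
      have := Nat.le_of_dvd (by norm_num) h
      have := hn i
      omega
    simpa using h
  set φ : Fin D × Bool → (∀ i, ZMod (n i)) := fun is =>
    if is.2 then j + Pi.single is.1 1 else j - Pi.single is.1 1 with hφ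
  have hφf : ∀ i, φ (i, false) = j - Pi.single i 1 := fun i => by simp [hφ]
  have hφt : ∀ i, φ (i, true) = j + Pi.single i 1 := fun i => by simp [hφ]
  have hQ : ∀ p : ∀ i, ZMod (n i),
      (∃ i, (j i = p i + 1 ∨ j i = p i - 1) ∧ ∀ k, k ≠ i → j k = p k)
        ↔ ∃ is : Fin D × Bool, φ is = p := by
    intro p
    constructor
    · rintro ⟨i, h1 | h1, h2⟩
      · refine ⟨(i, false), ?_⟩
        rw [hφf]
        funext k
        by_cases hk : k = i
        · subst hk
          rw [Pi.sub_apply, Pi.single_eq_same, h1]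
          ring
        · rw [Pi.sub_apply, Pi.single_eq_of_ne hk, sub_zero]
          exact h2 k hk
      · refine ⟨(i, true), ?_⟩
        rw [hφt]
        funext k
        by_cases hk : k = i
        · subst hk
          rw [Pi.add_apply, Pi.single_eq_same, h1]
          ring
        · rw [Pi.add_apply, Pi.single_eq_of_ne hk, add_zero]
          exact h2 k hk
    · rintro ⟨⟨i, b⟩, rfl⟩
      cases b
      · rw [hφf]
        refine ⟨i, Or.inl ?_, fun k hk => ?_⟩
        · rw [Pi.sub_apply, Pi.single_eq_same]
          ring
        · rw [Pi.sub_apply, Pi.single_eq_of_ne hk, sub_zero]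
      · rw [hφt]
        refine ⟨i, Or.inr ?_, fun k hk => ?_⟩
        · rw [Pi.add_apply, Pi.single_eq_same]
          ring
        · rw [Pi.add_apply, Pi.single_eq_of_ne hk, add_zero]
  have hinj : ∀ a ∈ (univ : Finset (Fin D × Bool)), ∀ b ∈ univ, φ a = φ b → a = b := by
    rintro ⟨i, b⟩ - ⟨i', b'⟩ - h
    by_cases hii : i = i'
    · subst hii
      cases b <;> cases b'
      · rfl
      · exfalso
        rw [hφf, hφt] at h
        have := congrFun h i
        simp only [Pi.sub_apply, Pi.add_apply, Pi.single_eq_same] at this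
        exact htwo i (by linear_combination - this)
      · exfalso
        rw [hφf, hφt] at h
        have := congrFun h i
        simp only [Pi.sub_apply, Pi.add_apply, Pi.single_eq_same] at this
        exact htwo i (by linear_combination this)
      · rfl
    · exfalso
      have hii' : i' ≠ i := Ne.symm hii
      have hc := congrFun h i
      cases b <;> cases b' <;> [rw [hφf, hφf] at hc; rw [hφf, hφt] at hc;
        rw [hφt, hφf] at hc; rw [hφt, hφt] at hc] <;>
        simp only [Pi.sub_apply, Pi.add_apply, Pi.single_eq_same,
          Pi.single_eq_of_ne hii] at hc
      · exact hone i (by linear_combination - hc)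
      · exact hone i (by linear_combination - hc)
      · exact hone i (by linear_combination hc)
      · exact hone i (by linear_combination hc)
  -- now compute the matrix-vector product
  have : Matrix.vecMul x (latticeMatrix n) j = ∑ p, x p * latticeMatrix n p j := by
    rfl
  rw [this]
  unfold latticeMatrix
  have e1 : ∀ p : ∀ i, ZMod (n i),
      (x p * if ∃ i, (j i = p i + 1 ∨ j i = p i - 1) ∧ ∀ k, k ≠ i → j k = p k then 1 else 0)
        = if ∃ is : Fin D × Bool, φ is = p then x p else 0 := by
    intro p
    rw [mul_ite, mul_one, mul_zero]
    by_cases h : ∃ i, (j i = p i + 1 ∨ j i = p i - 1) ∧ ∀ k, k ≠ i → j k = p k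
    · rw [if_pos h, if_pos ((hQ p).mp h)]
    · rw [if_neg h, if_neg (fun hh => h ((hQ p).mpr hh))]
  rw [Finset.sum_congr rfl (fun p _ => e1 p)]
  rw [← Finset.sum_filter]
  have e2 : univ.filter (fun p => ∃ is : Fin D × Bool, φ is = p) = univ.image φ := by
    ext p
    simp [eq_comm]
  rw [e2, Finset.sum_image hinj]
  rw [Fintype.sum_prod_type]
  unfold zf
  refine Finset.sum_congr rfl (fun i _ => ?_)
  rw [Fintype.sum_bool]
  rw [hφf, hφt]

theorem stmt_1 (D : ℕ) (hD : 1 ≤ D) (n : Fin D → ℕ) (hn : ∀ i, 8 ≤ n i)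
    [∀ i, NeZero (n i)] :
    ∀ x : (∀ i, ZMod (n i)) → ZMod 2, x ≠ 0 →
      2 * D + 1 ≤ sympWeight x (Matrix.vecMul x (latticeMatrix n)) := by
  intro x hx
  have hmain := torus_main D (Fin D) n hn (Fintype.card_fin D) x hx
  unfold sympWeight
  rw [vecMul_lattice D n hn x]
  exact hmain
end Main
end

section
/- Let D ≥ 1 and let n₁, …, n_D be integers with n_i ≥ 8 for all i, let V = (ℤ/n₁ℤ) × ⋯ × (ℤ/n_Dℤ) and let A be the adjacency matrix over F₂ of the lattice graph Λ_{n₁,…,n_D} on V (vertices adjacent iff at Lee distance 1). Let C ⊆ F₂^V be an F₂-linear subspace in which every nonzero codeword has Hamming weight strictly greater than 2D(2D+1). Then for every x ∈ F₂^V and every c ∈ C with (x, xA + c) ≠ (0,0), the symplectic weight of (x, xA + c) is at least 2D+1. -/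
open Matrix

set_option linter.unusedSectionVars false
set_option maxHeartbeats 1600000

namespace LCWS

variable {ι : Type} [Fintype ι] [DecidableEq ι] {n : ι → ℕ}

/-- The F₂ adjacency operator of the lattice, in coordinate form. -/
def zop (n : ι → ℕ) [Fintype ι] [DecidableEq ι]
    (x : (∀ i, ZMod (n i)) → ZMod 2) (w : ∀ i, ZMod (n i)) : ZMod 2 :=
  ∑ i : ι, (x (Function.update w i (w i + 1)) + x (Function.update w i (w i - 1)))

/-- Insert a value at coordinate `i₀`. -/
def ins (i₀ : ι) (k : ZMod (n i₀)) (v : ∀ j : {j : ι // j ≠ i₀}, ZMod (n j.1)) :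
    ∀ i, ZMod (n i) :=
  fun i => if h : i = i₀ then cast (by rw [h]) k else v ⟨i, h⟩

@[simp] lemma ins_same (i₀ : ι) (k : ZMod (n i₀)) (v) : ins i₀ k v i₀ = k := by
  unfold ins
  rw [dif_pos rfl]
  rfl

lemma ins_other (i₀ : ι) (k : ZMod (n i₀)) (v) {i : ι} (h : i ≠ i₀) :
    ins i₀ k v i = v ⟨i, h⟩ := by
  unfold ins
  rw [dif_neg h]

lemma update_ins_same (i₀ : ι) (k c : ZMod (n i₀)) (v) :
    Function.update (ins i₀ k v) i₀ c = ins i₀ c v := by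
  funext j
  by_cases h : j = i₀
  · subst h; rw [Function.update_self, ins_same]
  · rw [Function.update_of_ne h, ins_other _ _ _ h, ins_other _ _ _ h]

lemma update_ins_other (i₀ : ι) (k : ZMod (n i₀)) (v) {i : ι} (h : i ≠ i₀) (c : ZMod (n i)) :
    Function.update (ins i₀ k v) i c = ins i₀ k (Function.update v ⟨i, h⟩ c) := by
  funext j
  by_cases hj : j = i₀
  · subst hj
    rw [Function.update_of_ne (Ne.symm h), ins_same, ins_same]
  · by_cases hji : j = i
    · subst hji
      rw [Function.update_self, ins_other _ _ _ hj, Function.update_self]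
    · rw [Function.update_of_ne hji, ins_other _ _ _ hj, ins_other _ _ _ hj,
        Function.update_of_ne (fun hh => hji (congrArg Subtype.val hh))]

/-- The equivalence splitting off coordinate `i₀`. -/
def insEquiv (i₀ : ι) :
    (ZMod (n i₀) × ∀ j : {j : ι // j ≠ i₀}, ZMod (n j.1)) ≃ (∀ i, ZMod (n i)) where
  toFun p := ins i₀ p.1 p.2
  invFun w := (w i₀, fun j => w j.1)
  left_inv p := by
    obtain ⟨k, v⟩ := p
    show (ins i₀ k v i₀, fun j : {j : ι // j ≠ i₀} => ins i₀ k v j.1) = (k, v)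
    rw [ins_same]
    congr 1
    funext j
    exact ins_other i₀ k v j.2
  right_inv w := by
    dsimp only
    funext i
    by_cases h : i = i₀
    · subst h; rw [ins_same]
    · rw [ins_other _ _ _ h]

lemma zsplit (i₀ : ι) (x : (∀ i, ZMod (n i)) → ZMod 2) (k : ZMod (n i₀)) (v) :
    zop n x (ins i₀ k v) =
      x (ins i₀ (k + 1) v) + x (ins i₀ (k - 1) v) +
        zop (fun j : {j : ι // j ≠ i₀} => n j.1) (fun v' => x (ins i₀ k v')) v := by
  unfold zop
  rw [← Finset.add_sum_erase Finset.univ _ (Finset.mem_univ i₀)]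
  congr 1
  · rw [ins_same, update_ins_same, update_ins_same]
  · rw [Finset.sum_subtype (p := fun j => j ≠ i₀) (Finset.univ.erase i₀)
      (fun j => by simp [Finset.mem_erase]) (fun i =>
        x (Function.update (ins i₀ k v) i ((ins i₀ k v) i + 1)) +
        x (Function.update (ins i₀ k v) i ((ins i₀ k v) i - 1)))]
    apply Finset.sum_congr rfl
    intro j _
    rw [ins_other i₀ k v j.2, update_ins_other i₀ k v j.2, update_ins_other i₀ k v j.2]

lemma card_filter_layers [∀ i, NeZero (n i)] (i₀ : ι)
    (P : (∀ i, ZMod (n i)) → Prop) [DecidablePred P] :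
    (Finset.univ.filter P).card =
      ∑ k : ZMod (n i₀), (Finset.univ.filter fun v => P (ins i₀ k v)).card := by
  rw [Finset.card_filter]
  rw [← Equiv.sum_comp (insEquiv i₀) (fun w => if P w then 1 else 0)]
  rw [Fintype.sum_prod_type]
  apply Finset.sum_congr rfl
  intro k _
  rw [Finset.card_filter]
  apply Finset.sum_congr rfl
  intro v _
  rfl

lemma num_ne {m : ℕ} (hm : 8 ≤ m) {c : ℕ} (h1 : 0 < c) (h2 : c ≤ 7) :
    ((c : ℕ) : ZMod m) ≠ 0 := by
  intro h
  have hd := (ZMod.natCast_eq_zero_iff c m).mp h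
  have := Nat.le_of_dvd h1 hd
  omega

lemma sum3_le {α : Type*} [Fintype α] [DecidableEq α] (f : α → ℕ) {i j l : α}
    (hij : i ≠ j) (hil : i ≠ l) (hjl : j ≠ l) :
    f i + f j + f l ≤ ∑ t, f t := by
  have h : ({i, j, l} : Finset α).sum f = f i + (f j + f l) := by
    rw [Finset.sum_insert (by simp [hij, hil]), Finset.sum_insert (by simp [hjl]),
      Finset.sum_singleton]
  have h2 : ({i, j, l} : Finset α).sum f ≤ ∑ t, f t :=
    Finset.sum_le_sum_of_subset (Finset.subset_univ _)
  omega

lemma sum4_le {α : Type*} [Fintype α] [DecidableEq α] (f : α → ℕ) {i j l p : α}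
    (hij : i ≠ j) (hil : i ≠ l) (hip : i ≠ p) (hjl : j ≠ l) (hjp : j ≠ p) (hlp : l ≠ p) :
    f i + f j + f l + f p ≤ ∑ t, f t := by
  have h : ({i, j, l, p} : Finset α).sum f = f i + (f j + (f l + f p)) := by
    rw [Finset.sum_insert (by simp [hij, hil, hip]), Finset.sum_insert (by simp [hjl, hjp]),
      Finset.sum_insert (by simp [hlp]), Finset.sum_singleton]
  have h2 : ({i, j, l, p} : Finset α).sum f ≤ ∑ t, f t :=
    Finset.sum_le_sum_of_subset (Finset.subset_univ _)
  omega

lemma sum5_le {α : Type*} [Fintype α] [DecidableEq α] (f : α → ℕ) {i j l p q : α}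
    (hij : i ≠ j) (hil : i ≠ l) (hip : i ≠ p) (hiq : i ≠ q)
    (hjl : j ≠ l) (hjp : j ≠ p) (hjq : j ≠ q) (hlp : l ≠ p) (hlq : l ≠ q) (hpq : p ≠ q) :
    f i + f j + f l + f p + f q ≤ ∑ t, f t := by
  have h : ({i, j, l, p, q} : Finset α).sum f = f i + (f j + (f l + (f p + f q))) := by
    rw [Finset.sum_insert (by simp [hij, hil, hip, hiq]),
      Finset.sum_insert (by simp [hjl, hjp, hjq]),
      Finset.sum_insert (by simp [hlp, hlq]), Finset.sum_insert (by simp [hpq]),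
      Finset.sum_singleton]
  have h2 : ({i, j, l, p, q} : Finset α).sum f ≤ ∑ t, f t :=
    Finset.sum_le_sum_of_subset (Finset.subset_univ _)
  omega

lemma sum6_le {α : Type*} [Fintype α] [DecidableEq α] (f : α → ℕ) {i j l p q r : α}
    (hij : i ≠ j) (hil : i ≠ l) (hip : i ≠ p) (hiq : i ≠ q) (hir : i ≠ r)
    (hjl : j ≠ l) (hjp : j ≠ p) (hjq : j ≠ q) (hjr : j ≠ r)
    (hlp : l ≠ p) (hlq : l ≠ q) (hlr : l ≠ r) (hpq : p ≠ q) (hpr : p ≠ r) (hqr : q ≠ r) :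
    f i + f j + f l + (f p + f q + f r) ≤ ∑ t, f t := by
  have h : ({i, j, l, p, q, r} : Finset α).sum f = f i + (f j + (f l + (f p + (f q + f r)))) := by
    rw [Finset.sum_insert (by simp [hij, hil, hip, hiq, hir]),
      Finset.sum_insert (by simp [hjl, hjp, hjq, hjr]),
      Finset.sum_insert (by simp [hlp, hlq, hlr]),
      Finset.sum_insert (by simp [hpq, hpr]), Finset.sum_insert (by simp [hqr]),
      Finset.sum_singleton]
  have h2 : ({i, j, l, p, q, r} : Finset α).sum f ≤ ∑ t, f t :=
    Finset.sum_le_sum_of_subset (Finset.subset_univ _)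
  omega

/-- The abstract one-dimensional layer analysis. -/
lemma layerMain {m : ℕ} [NeZero m] (hm : 8 ≤ m) (N : ℕ) (a ω : ZMod m → ℕ)
    (hB2 : ∀ k, a k ≤ ω k)
    (hB1 : ∀ k, 0 < a k → 2 * N + 1 ≤ ω k + a (k - 1) + a (k + 1))
    (hB3a : ∀ k, a k = 0 → a (k - 1) = 0 → a (k + 1) ≤ ω k)
    (hB3b : ∀ k, a k = 0 → a (k + 1) = 0 → a (k - 1) ≤ ω k)
    (hex : ∃ k, 0 < a k) :
    2 * (N + 1) + 1 ≤ ∑ k, ω k := by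
  classical
  have hpair : ∀ (u v : ZMod m) (c : ℕ), 0 < c → c ≤ 7 → v - u = (c : ℕ) → u ≠ v := by
    intro u v c h1 h2 hc h
    subst h
    rw [sub_self] at hc
    exact num_ne hm h1 h2 hc.symm
  set s : ℕ := ∑ k, a k with hs
  have hωs : ∑ k, a k ≤ ∑ k, ω k := Finset.sum_le_sum fun k _ => hB2 k
  by_cases htriv : 2 * (N + 1) + 1 ≤ s
  · omega
  push_neg at htriv
  -- Case 0 : some occupied layer sees at most s-2 of the mass in its 3-window
  by_cases hc0 : ∃ k, 0 < a k ∧ a (k - 1) + a k + a (k + 1) + 2 ≤ s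
  · obtain ⟨k, hk, hF⟩ := hc0
    have h1 := hB1 k hk
    have hKsub : a k + ∑ j ∈ Finset.univ.erase k, a j = s :=
      Finset.add_sum_erase _ a (Finset.mem_univ k)
    have h2 : ∑ j ∈ Finset.univ.erase k, a j ≤ ∑ j ∈ Finset.univ.erase k, ω j :=
      Finset.sum_le_sum fun j _ => hB2 j
    have h3 : ω k + ∑ j ∈ Finset.univ.erase k, ω j = ∑ j, ω j :=
      Finset.add_sum_erase _ ω (Finset.mem_univ k)
    omega
  push_neg at hc0
  obtain ⟨k₀, hk₀⟩ := hex
  by_cases hfar : ∃ k, 0 < a k ∧ ∃ k', 0 < a k' ∧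
      ¬(k' - k = 0 ∨ k' - k = 1 ∨ k' - k = -1 ∨ k' - k = 2 ∨ k' - k = -2)
  · -- FAR case: two occupied layers with disjoint 3-windows
    obtain ⟨k, hk, k', hk', hnear⟩ := hfar
    push_neg at hnear
    obtain ⟨hd0, hd1, hdm1, hd2, hdm2⟩ := hnear
    have q1 : k - 1 ≠ k := hpair _ _ 1 one_pos (by norm_num) (by push_cast; ring)
    have q2 : k - 1 ≠ k + 1 := hpair _ _ 2 (by norm_num) (by norm_num) (by push_cast; ring)
    have q3 : k ≠ k + 1 := hpair _ _ 1 one_pos (by norm_num) (by push_cast; ring)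
    have q4 : k' - 1 ≠ k' := hpair _ _ 1 one_pos (by norm_num) (by push_cast; ring)
    have q5 : k' ≠ k' + 1 := hpair _ _ 1 one_pos (by norm_num) (by push_cast; ring)
    have q6 : k' - 1 ≠ k' + 1 := hpair _ _ 2 (by norm_num) (by norm_num) (by push_cast; ring)
    have ck : k ≠ k' := fun h => hd0 (by rw [h, sub_self])
    have ckm : k - 1 ≠ k' := fun h => hdm1 (by linear_combination -h)
    have ckp : k + 1 ≠ k' := fun h => hd1 (by linear_combination -h)
    have ckm2 : k - 2 ≠ k := hpair _ _ 2 (by norm_num) (by norm_num) (by push_cast; ring)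
    have ckm2' : k - 2 ≠ k' := fun h => hdm2 (by linear_combination -h)
    have ckp2 : k + 2 ≠ k := (hpair k (k + 2) 2 (by norm_num) (by norm_num)
      (by push_cast; ring)).symm
    have ckp2' : k + 2 ≠ k' := fun h => hd2 (by linear_combination -h)
    have ck1m : k' - 1 ≠ k := fun h => hd1 (by linear_combination h)
    have ck1p : k' + 1 ≠ k := fun h => hdm1 (by linear_combination h)
    -- six-window sum
    have h6 : a (k - 1) + a k + a (k + 1) + (a (k' - 1) + a k' + a (k' + 1)) ≤ s := by
      rw [hs]
      refine sum6_le a q1 q2 ?_ ?_ ?_ q3 ?_ ck ?_ ?_ ckp ?_ q4 q6 q5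
      · intro h; exact hd0 (by linear_combination -h)
      · exact ckm
      · intro h; exact hdm2 (by linear_combination -h)
      · intro h; exact hd1 (by linear_combination -h)
      · intro h; exact hdm1 (by linear_combination -h)
      · intro h; exact hd2 (by linear_combination -h)
      · intro h; exact hd0 (by linear_combination -h)
    have hFk := hc0 k hk
    have hFk' := hc0 k' hk'
    have hs2 : s ≤ 2 := by omega
    have hzero : ∀ j, j ≠ k → j ≠ k' → a j = 0 := by
      intro j hjk hjk'
      have h3 : a k + a k' + a j ≤ s := by
        rw [hs]; exact sum3_le a ck hjk.symm hjk'.symm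
      omega
    have za1 : a (k - 1) = 0 := hzero _ q1 ckm
    have za2 : a (k + 1) = 0 := hzero _ q3.symm ckp
    have za3 : a (k - 2) = 0 := hzero _ ckm2 ckm2'
    have za4 : a (k + 2) = 0 := hzero _ ckp2 ckp2'
    have za5 : a (k' - 1) = 0 := hzero _ ck1m q4
    have za6 : a (k' + 1) = 0 := hzero _ ck1p q5.symm
    have hωk := hB1 k hk
    have hωk' := hB1 k' hk'
    have hleft : a k ≤ ω (k - 1) := by
      have h := hB3a (k - 1) za1 (by rw [show k - 1 - 1 = k - 2 from by ring]; exact za3)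
      rwa [show k - 1 + 1 = k from by ring] at h
    have hright : a k ≤ ω (k + 1) := by
      have h := hB3b (k + 1) za2 (by rw [show k + 1 + 1 = k + 2 from by ring]; exact za4)
      rwa [show k + 1 - 1 = k from by ring] at h
    have hsum4 : ω (k - 1) + ω k + ω (k + 1) + ω k' ≤ ∑ t, ω t :=
      sum4_le ω q1 q2 ckm q3 ck ckp
    omega
  · -- NEAR case: all occupied layers lie in a 3-window
    push_neg at hfar
    have hwin : ∃ u : ZMod m, ∀ j, 0 < a j → (j = u ∨ j = u + 1 ∨ j = u + 2) := by
      by_cases hp : 0 < a (k₀ + 2)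
      · refine ⟨k₀, fun j hj => ?_⟩
        have h1 := hfar k₀ hk₀ j hj
        have h2 := hfar (k₀ + 2) hp j hj
        rcases h1 with h | h | h | h | h
        · exact Or.inl (by linear_combination h)
        · exact Or.inr (Or.inl (by linear_combination h))
        · exfalso
          rcases h2 with g | g | g | g | g
          · exact num_ne hm (c := 3) (by norm_num) (by norm_num) (by push_cast; linear_combination h - g)
          · exact num_ne hm (c := 4) (by norm_num) (by norm_num) (by push_cast; linear_combination h - g)
          · exact num_ne hm (c := 2) (by norm_num) (by norm_num) (by push_cast; linear_combination h - g)
          · exact num_ne hm (c := 5) (by norm_num) (by norm_num) (by push_cast; linear_combination h - g)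
          · exact num_ne hm (c := 1) (by norm_num) (by norm_num) (by push_cast; linear_combination h - g)
        · exact Or.inr (Or.inr (by linear_combination h))
        · exfalso
          rcases h2 with g | g | g | g | g
          · exact num_ne hm (c := 4) (by norm_num) (by norm_num) (by push_cast; linear_combination h - g)
          · exact num_ne hm (c := 5) (by norm_num) (by norm_num) (by push_cast; linear_combination h - g)
          · exact num_ne hm (c := 3) (by norm_num) (by norm_num) (by push_cast; linear_combination h - g)
          · exact num_ne hm (c := 6) (by norm_num) (by norm_num) (by push_cast; linear_combination h - g)
          · exact num_ne hm (c := 2) (by norm_num) (by norm_num) (by push_cast; linear_combination h - g)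
      · by_cases hq : 0 < a (k₀ - 2)
        · refine ⟨k₀ - 2, fun j hj => ?_⟩
          have h1 := hfar k₀ hk₀ j hj
          have h2 := hfar (k₀ - 2) hq j hj
          rcases h1 with h | h | h | h | h
          · exact Or.inr (Or.inr (by linear_combination h))
          · exfalso
            rcases h2 with g | g | g | g | g
            · exact num_ne hm (c := 3) (by norm_num) (by norm_num) (by push_cast; linear_combination g - h)
            · exact num_ne hm (c := 2) (by norm_num) (by norm_num) (by push_cast; linear_combination g - h)
            · exact num_ne hm (c := 4) (by norm_num) (by norm_num) (by push_cast; linear_combination g - h)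
            · exact num_ne hm (c := 1) (by norm_num) (by norm_num) (by push_cast; linear_combination g - h)
            · exact num_ne hm (c := 5) (by norm_num) (by norm_num) (by push_cast; linear_combination g - h)
          · exact Or.inr (Or.inl (by linear_combination h))
          · exfalso
            rcases h2 with g | g | g | g | g
            · exact num_ne hm (c := 4) (by norm_num) (by norm_num) (by push_cast; linear_combination g - h)
            · exact num_ne hm (c := 3) (by norm_num) (by norm_num) (by push_cast; linear_combination g - h)
            · exact num_ne hm (c := 5) (by norm_num) (by norm_num) (by push_cast; linear_combination g - h)
            · exact num_ne hm (c := 2) (by norm_num) (by norm_num) (by push_cast; linear_combination g - h)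
            · exact num_ne hm (c := 6) (by norm_num) (by norm_num) (by push_cast; linear_combination g - h)
          · exact Or.inl (by linear_combination h)
        · refine ⟨k₀ - 1, fun j hj => ?_⟩
          have h1 := hfar k₀ hk₀ j hj
          rcases h1 with h | h | h | h | h
          · exact Or.inr (Or.inl (by linear_combination h))
          · exact Or.inr (Or.inr (by linear_combination h))
          · exact Or.inl (by linear_combination h)
          · exact absurd (show (0 : ℕ) < a (k₀ + 2) from by
              rw [show k₀ + 2 = j from by linear_combination -h]; exact hj) hp
          · exact absurd (show (0 : ℕ) < a (k₀ - 2) from by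
              rw [show k₀ - 2 = j from by linear_combination -h]; exact hj) hq
    obtain ⟨u, hwin⟩ := hwin
    -- the four shape lemmas
    have hP1 : ∀ w, 0 < a w → (∀ j, j ≠ w → a j = 0) → 2 * (N + 1) + 1 ≤ ∑ k, ω k := by
      intro w hw h0
      have d1 : w - 1 ≠ w := hpair _ _ 1 one_pos (by norm_num) (by push_cast; ring)
      have d2 : w ≠ w + 1 := hpair _ _ 1 one_pos (by norm_num) (by push_cast; ring)
      have d3 : w - 1 ≠ w + 1 := hpair _ _ 2 (by norm_num) (by norm_num) (by push_cast; ring)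
      have d4 : w - 2 ≠ w := hpair _ _ 2 (by norm_num) (by norm_num) (by push_cast; ring)
      have d5 : w + 2 ≠ w := (hpair w (w + 2) 2 (by norm_num) (by norm_num) (by push_cast; ring)).symm
      have z1 : a (w - 1) = 0 := h0 _ d1
      have z2 : a (w + 1) = 0 := h0 _ d2.symm
      have z3 : a (w - 2) = 0 := h0 _ d4
      have z4 : a (w + 2) = 0 := h0 _ d5
      have hb1 := hB1 w hw
      have hl : a w ≤ ω (w - 1) := by
        have h := hB3a (w - 1) z1 (by rw [show w - 1 - 1 = w - 2 from by ring]; exact z3)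
        rwa [show w - 1 + 1 = w from by ring] at h
      have hr : a w ≤ ω (w + 1) := by
        have h := hB3b (w + 1) z2 (by rw [show w + 1 + 1 = w + 2 from by ring]; exact z4)
        rwa [show w + 1 - 1 = w from by ring] at h
      have hsum := sum3_le ω d1 d3 d2
      omega
    have hP2 : ∀ w, 0 < a w → 0 < a (w + 1) → (∀ j, j ≠ w → j ≠ w + 1 → a j = 0) →
        2 * (N + 1) + 1 ≤ ∑ k, ω k := by
      intro w hw hw1 h0
      have d1 : w - 1 ≠ w := hpair _ _ 1 one_pos (by norm_num) (by push_cast; ring)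
      have d2 : w ≠ w + 1 := hpair _ _ 1 one_pos (by norm_num) (by push_cast; ring)
      have d3 : w - 1 ≠ w + 1 := hpair _ _ 2 (by norm_num) (by norm_num) (by push_cast; ring)
      have d4 : w - 1 ≠ w + 2 := hpair _ _ 3 (by norm_num) (by norm_num) (by push_cast; ring)
      have d5 : w ≠ w + 2 := hpair _ _ 2 (by norm_num) (by norm_num) (by push_cast; ring)
      have d6 : w + 1 ≠ w + 2 := hpair _ _ 1 one_pos (by norm_num) (by push_cast; ring)
      have d7 : w - 2 ≠ w := hpair _ _ 2 (by norm_num) (by norm_num) (by push_cast; ring)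
      have d8 : w - 2 ≠ w + 1 := hpair _ _ 3 (by norm_num) (by norm_num) (by push_cast; ring)
      have d9 : w + 3 ≠ w := (hpair w (w + 3) 3 (by norm_num) (by norm_num) (by push_cast; ring)).symm
      have d10 : w + 3 ≠ w + 1 := (hpair (w + 1) (w + 3) 2 (by norm_num) (by norm_num) (by push_cast; ring)).symm
      have d11 : w + 2 ≠ w := d5.symm
      have z1 : a (w - 1) = 0 := h0 _ d1 d3
      have z2 : a (w - 2) = 0 := h0 _ d7 d8
      have z3 : a (w + 2) = 0 := h0 _ d11 d6.symm
      have z4 : a (w + 3) = 0 := h0 _ d9 d10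
      have hb1 := hB1 w hw
      have hb2 : 2 * N + 1 ≤ ω (w + 1) + a w + a (w + 2) := by
        have h := hB1 (w + 1) hw1
        rwa [show w + 1 - 1 = w from by ring, show w + 1 + 1 = w + 2 from by ring] at h
      have hl : a w ≤ ω (w - 1) := by
        have h := hB3a (w - 1) z1 (by rw [show w - 1 - 1 = w - 2 from by ring]; exact z2)
        rwa [show w - 1 + 1 = w from by ring] at h
      have hr : a (w + 1) ≤ ω (w + 2) := by
        have h := hB3b (w + 2) z3 (by rw [show w + 2 + 1 = w + 3 from by ring]; exact z4)
        rwa [show w + 2 - 1 = w + 1 from by ring] at h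
      have hm1 := hB2 w
      have hm2 := hB2 (w + 1)
      have hsum := sum4_le ω d1 d3 d4 d2 d5 d6
      omega
    have hP3 : ∀ w, 0 < a w → 0 < a (w + 2) → (∀ j, j ≠ w → j ≠ w + 2 → a j = 0) →
        2 * (N + 1) + 1 ≤ ∑ k, ω k := by
      intro w hw hw2 h0
      have d1 : w - 1 ≠ w := hpair _ _ 1 one_pos (by norm_num) (by push_cast; ring)
      have d2 : w - 1 ≠ w + 2 := hpair _ _ 3 (by norm_num) (by norm_num) (by push_cast; ring)
      have d3 : w - 1 ≠ w + 3 := hpair _ _ 4 (by norm_num) (by norm_num) (by push_cast; ring)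
      have d4 : w ≠ w + 2 := hpair _ _ 2 (by norm_num) (by norm_num) (by push_cast; ring)
      have d5 : w ≠ w + 3 := hpair _ _ 3 (by norm_num) (by norm_num) (by push_cast; ring)
      have d6 : w + 2 ≠ w + 3 := hpair _ _ 1 one_pos (by norm_num) (by push_cast; ring)
      have d7 : w - 2 ≠ w := hpair _ _ 2 (by norm_num) (by norm_num) (by push_cast; ring)
      have d8 : w - 2 ≠ w + 2 := hpair _ _ 4 (by norm_num) (by norm_num) (by push_cast; ring)
      have d9 : w + 1 ≠ w := (hpair w (w + 1) 1 one_pos (by norm_num) (by push_cast; ring)).symm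
      have d10 : w + 1 ≠ w + 2 := hpair _ _ 1 one_pos (by norm_num) (by push_cast; ring)
      have d11 : w + 3 ≠ w := d5.symm
      have d12 : w + 3 ≠ w + 2 := d6.symm
      have d13 : w + 4 ≠ w := (hpair w (w + 4) 4 (by norm_num) (by norm_num) (by push_cast; ring)).symm
      have d14 : w + 4 ≠ w + 2 := (hpair (w + 2) (w + 4) 2 (by norm_num) (by norm_num) (by push_cast; ring)).symm
      have z1 : a (w - 1) = 0 := h0 _ d1 d2
      have z2 : a (w - 2) = 0 := h0 _ d7 d8
      have z3 : a (w + 1) = 0 := h0 _ d9 d10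
      have z4 : a (w + 3) = 0 := h0 _ d11 d12
      have z5 : a (w + 4) = 0 := h0 _ d13 d14
      have hb1 := hB1 w hw
      have hb2 : 2 * N + 1 ≤ ω (w + 2) + a (w + 1) + a (w + 3) := by
        have h := hB1 (w + 2) hw2
        rwa [show w + 2 - 1 = w + 1 from by ring, show w + 2 + 1 = w + 3 from by ring] at h
      have hl : a w ≤ ω (w - 1) := by
        have h := hB3a (w - 1) z1 (by rw [show w - 1 - 1 = w - 2 from by ring]; exact z2)
        rwa [show w - 1 + 1 = w from by ring] at h
      have hr : a (w + 2) ≤ ω (w + 3) := by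
        have h := hB3b (w + 3) z4 (by rw [show w + 3 + 1 = w + 4 from by ring]; exact z5)
        rwa [show w + 3 - 1 = w + 2 from by ring] at h
      have hsum := sum4_le ω d1 d2 d3 d4 d5 d6
      omega
    have hP4 : ∀ w, 0 < a w → 0 < a (w + 1) → 0 < a (w + 2) →
        (∀ j, j ≠ w → j ≠ w + 1 → j ≠ w + 2 → a j = 0) →
        2 * (N + 1) + 1 ≤ ∑ k, ω k := by
      intro w hw hw1 hw2 h0
      have d1 : w - 1 ≠ w := hpair _ _ 1 one_pos (by norm_num) (by push_cast; ring)
      have d2 : w - 1 ≠ w + 1 := hpair _ _ 2 (by norm_num) (by norm_num) (by push_cast; ring)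
      have d3 : w - 1 ≠ w + 2 := hpair _ _ 3 (by norm_num) (by norm_num) (by push_cast; ring)
      have d4 : w - 1 ≠ w + 3 := hpair _ _ 4 (by norm_num) (by norm_num) (by push_cast; ring)
      have d5 : w ≠ w + 1 := hpair _ _ 1 one_pos (by norm_num) (by push_cast; ring)
      have d6 : w ≠ w + 2 := hpair _ _ 2 (by norm_num) (by norm_num) (by push_cast; ring)
      have d7 : w ≠ w + 3 := hpair _ _ 3 (by norm_num) (by norm_num) (by push_cast; ring)
      have d8 : w + 1 ≠ w + 2 := hpair _ _ 1 one_pos (by norm_num) (by push_cast; ring)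
      have d9 : w + 1 ≠ w + 3 := hpair _ _ 2 (by norm_num) (by norm_num) (by push_cast; ring)
      have d10 : w + 2 ≠ w + 3 := hpair _ _ 1 one_pos (by norm_num) (by push_cast; ring)
      have d11 : w - 2 ≠ w := hpair _ _ 2 (by norm_num) (by norm_num) (by push_cast; ring)
      have d12 : w - 2 ≠ w + 1 := hpair _ _ 3 (by norm_num) (by norm_num) (by push_cast; ring)
      have d13 : w - 2 ≠ w + 2 := hpair _ _ 4 (by norm_num) (by norm_num) (by push_cast; ring)
      have d14 : w + 4 ≠ w := (hpair w (w + 4) 4 (by norm_num) (by norm_num) (by push_cast; ring)).symm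
      have d15 : w + 4 ≠ w + 1 := (hpair (w + 1) (w + 4) 3 (by norm_num) (by norm_num) (by push_cast; ring)).symm
      have d16 : w + 4 ≠ w + 2 := (hpair (w + 2) (w + 4) 2 (by norm_num) (by norm_num) (by push_cast; ring)).symm
      have d17 : w + 3 ≠ w := d7.symm
      have d18 : w + 3 ≠ w + 1 := d9.symm
      have d19 : w + 3 ≠ w + 2 := d10.symm
      have z1 : a (w - 1) = 0 := h0 _ d1 d2 d3
      have z2 : a (w - 2) = 0 := h0 _ d11 d12 d13
      have z3 : a (w + 3) = 0 := h0 _ d17 d18 d19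
      have z4 : a (w + 4) = 0 := h0 _ d14 d15 d16
      have hb1 := hB1 w hw
      have hb2 : 2 * N + 1 ≤ ω (w + 2) + a (w + 1) + a (w + 3) := by
        have h := hB1 (w + 2) hw2
        rwa [show w + 2 - 1 = w + 1 from by ring, show w + 2 + 1 = w + 3 from by ring] at h
      have hmid := hB2 (w + 1)
      have hl : a w ≤ ω (w - 1) := by
        have h := hB3a (w - 1) z1 (by rw [show w - 1 - 1 = w - 2 from by ring]; exact z2)
        rwa [show w - 1 + 1 = w from by ring] at h
      have hr : a (w + 2) ≤ ω (w + 3) := by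
        have h := hB3b (w + 3) z3 (by rw [show w + 3 + 1 = w + 4 from by ring]; exact z4)
        rwa [show w + 3 - 1 = w + 2 from by ring] at h
      have habc : a w + a (w + 1) + a (w + 2) ≤ s := by
        rw [hs]; exact sum3_le a d5 d6 d8
      have hsum := sum5_le ω d1 d2 d3 d4 d5 d6 d7 d8 d9 d10
      omega
    by_cases b0 : 0 < a u
    · by_cases b1 : 0 < a (u + 1)
      · by_cases b2 : 0 < a (u + 2)
        · refine hP4 u b0 b1 b2 (fun j h1 h2 h3 => ?_)
          by_contra hja
          have hj : 0 < a j := Nat.pos_of_ne_zero hja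
          rcases hwin j hj with e | e | e
          · exact h1 e
          · exact h2 e
          · exact h3 e
        · refine hP2 u b0 b1 (fun j h1 h2 => ?_)
          by_contra hja
          have hj : 0 < a j := Nat.pos_of_ne_zero hja
          rcases hwin j hj with e | e | e
          · exact h1 e
          · exact h2 e
          · exact b2 (e ▸ hj)
      · by_cases b2 : 0 < a (u + 2)
        · refine hP3 u b0 b2 (fun j h1 h2 => ?_)
          by_contra hja
          have hj : 0 < a j := Nat.pos_of_ne_zero hja
          rcases hwin j hj with e | e | e
          · exact h1 e
          · exact b1 (e ▸ hj)
          · exact h2 e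
        · refine hP1 u b0 (fun j h1 => ?_)
          by_contra hja
          have hj : 0 < a j := Nat.pos_of_ne_zero hja
          rcases hwin j hj with e | e | e
          · exact h1 e
          · exact b1 (e ▸ hj)
          · exact b2 (e ▸ hj)
    · by_cases b1 : 0 < a (u + 1)
      · by_cases b2 : 0 < a (u + 2)
        · refine hP2 (u + 1) b1 (by rwa [show u + 1 + 1 = u + 2 from by ring]) (fun j h1 h2 => ?_)
          by_contra hja
          have hj : 0 < a j := Nat.pos_of_ne_zero hja
          rcases hwin j hj with e | e | e
          · exact b0 (e ▸ hj)
          · exact h1 e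
          · exact h2 (by rw [e]; ring)
        · refine hP1 (u + 1) b1 (fun j h1 => ?_)
          by_contra hja
          have hj : 0 < a j := Nat.pos_of_ne_zero hja
          rcases hwin j hj with e | e | e
          · exact b0 (e ▸ hj)
          · exact h1 e
          · exact b2 (e ▸ hj)
      · by_cases b2 : 0 < a (u + 2)
        · refine hP1 (u + 2) b2 (fun j h1 => ?_)
          by_contra hja
          have hj : 0 < a j := Nat.pos_of_ne_zero hja
          rcases hwin j hj with e | e | e
          · exact b0 (e ▸ hj)
          · exact b1 (e ▸ hj)
          · exact h1 e
        · exfalso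
          rcases hwin k₀ hk₀ with e | e | e
          · exact b0 (e ▸ hk₀)
          · exact b1 (e ▸ hk₀)
          · exact b2 (e ▸ hk₀)


theorem coreAux :
    ∀ (N : ℕ) (ι : Type) [Fintype ι] [DecidableEq ι] (n : ι → ℕ) [∀ i, NeZero (n i)],
      (∀ i, 8 ≤ n i) → ∀ (x : (∀ i, ZMod (n i)) → ZMod 2), Fintype.card ι ≤ N → x ≠ 0 →
      2 * Fintype.card ι + 1 ≤
        (Finset.univ.filter fun w => x w ≠ 0 ∨ zop n x w ≠ 0).card := by
  intro N
  induction N with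
  | zero =>
    intro ι _ _ n _ hn x hcard hx
    have hc0 : Fintype.card ι = 0 := Nat.le_zero.mp hcard
    rw [hc0]
    obtain ⟨w, hw⟩ := Function.ne_iff.mp hx
    have : w ∈ Finset.univ.filter fun w => x w ≠ 0 ∨ zop n x w ≠ 0 :=
      Finset.mem_filter.mpr ⟨Finset.mem_univ _, Or.inl hw⟩
    have hpos := Finset.card_pos.mpr ⟨w, this⟩
    omega
  | succ N IH =>
    intro ι instF instD n instNZ hn x hcard hx
    rcases le_or_gt (Fintype.card ι) N with hle | hlt
    · exact IH ι n hn x hle hx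
    have hcι : Fintype.card ι = N + 1 := le_antisymm hcard hlt
    have hne : Nonempty ι := Fintype.card_pos_iff.mp (by omega)
    obtain ⟨i₀⟩ := hne
    haveI hNZ' : ∀ j : {j : ι // j ≠ i₀}, NeZero (n j.1) := fun j => instNZ j.1
    have hn' : ∀ j : {j : ι // j ≠ i₀}, 8 ≤ n j.1 := fun j => hn j.1
    have hcard' : Fintype.card {j : ι // j ≠ i₀} = N := by
      have h2 := Fintype.card_subtype_compl (fun j : ι => j = i₀)
      rw [Fintype.card_subtype_eq i₀, hcι] at h2
      calc Fintype.card {j : ι // j ≠ i₀}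
          = Fintype.card {j : ι // ¬j = i₀} := Fintype.card_congr (Equiv.refl _)
        _ = N + 1 - 1 := h2
        _ = N := rfl
    -- layer weight and layer union-weight
    have haz : ∀ k : ZMod (n i₀),
        (Finset.univ.filter fun v => x (ins i₀ k v) ≠ 0).card = 0 ↔
          ∀ v, x (ins i₀ k v) = 0 := by
      intro k
      rw [Finset.card_eq_zero, Finset.filter_eq_empty_iff]
      constructor
      · intro h v
        by_contra hv
        exact h (Finset.mem_univ v) hv
      · intro h v _ hv
        exact hv (h v)
    have hB2 : ∀ k : ZMod (n i₀),
        (Finset.univ.filter fun v => x (ins i₀ k v) ≠ 0).card ≤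
          (Finset.univ.filter fun v =>
            x (ins i₀ k v) ≠ 0 ∨ zop n x (ins i₀ k v) ≠ 0).card := by
      intro k
      exact Finset.card_le_card
        (Finset.monotone_filter_right _ (fun v _ hv => Or.inl hv))
    have hB1 : ∀ k : ZMod (n i₀),
        0 < (Finset.univ.filter fun v => x (ins i₀ k v) ≠ 0).card →
        2 * N + 1 ≤
          (Finset.univ.filter fun v =>
            x (ins i₀ k v) ≠ 0 ∨ zop n x (ins i₀ k v) ≠ 0).card +
          (Finset.univ.filter fun v => x (ins i₀ (k - 1) v) ≠ 0).card +
          (Finset.univ.filter fun v => x (ins i₀ (k + 1) v) ≠ 0).card := by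
      intro k hk
      obtain ⟨v₀, hv₀mem⟩ := Finset.card_pos.mp hk
      have hv₀ : x (ins i₀ k v₀) ≠ 0 := (Finset.mem_filter.mp hv₀mem).2
      have hx' : (fun v => x (ins i₀ k v)) ≠ 0 := fun h => hv₀ (congrFun h v₀)
      have hIH := IH {j : ι // j ≠ i₀} (fun j => n j.1) hn'
        (fun v => x (ins i₀ k v)) (le_of_eq hcard') hx'
      rw [hcard'] at hIH
      refine le_trans hIH ?_
      have hsub : (Finset.univ.filter fun v =>
            (fun v => x (ins i₀ k v)) v ≠ 0 ∨
              zop (fun j : {j : ι // j ≠ i₀} => n j.1) (fun v => x (ins i₀ k v)) v ≠ 0) ⊆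
          ((Finset.univ.filter fun v =>
              x (ins i₀ k v) ≠ 0 ∨ zop n x (ins i₀ k v) ≠ 0) ∪
            (Finset.univ.filter fun v => x (ins i₀ (k - 1) v) ≠ 0)) ∪
            (Finset.univ.filter fun v => x (ins i₀ (k + 1) v) ≠ 0) := by
        intro v hv
        rcases (Finset.mem_filter.mp hv).2 with h | h
        · exact Finset.mem_union_left _ (Finset.mem_union_left _
            (Finset.mem_filter.mpr ⟨Finset.mem_univ _, Or.inl h⟩))
        · by_cases hz : zop n x (ins i₀ k v) ≠ 0
          · exact Finset.mem_union_left _ (Finset.mem_union_left _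
              (Finset.mem_filter.mpr ⟨Finset.mem_univ _, Or.inr hz⟩))
          · push_neg at hz
            have hsplit := zsplit i₀ x k v
            rw [hz] at hsplit
            have hAB : x (ins i₀ (k + 1) v) ≠ 0 ∨ x (ins i₀ (k - 1) v) ≠ 0 := by
              have hdec : ∀ A B C : ZMod 2, 0 = A + B + C → C ≠ 0 → A ≠ 0 ∨ B ≠ 0 := by
                decide
              exact hdec _ _ _ hsplit h
            rcases hAB with h1 | h1
            · exact Finset.mem_union_right _
                (Finset.mem_filter.mpr ⟨Finset.mem_univ _, h1⟩)
            · exact Finset.mem_union_left _ (Finset.mem_union_right _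
                (Finset.mem_filter.mpr ⟨Finset.mem_univ _, h1⟩))
      refine le_trans (Finset.card_le_card hsub) ?_
      refine le_trans (Finset.card_union_le _ _) ?_
      have := Finset.card_union_le
        (Finset.univ.filter fun v => x (ins i₀ k v) ≠ 0 ∨ zop n x (ins i₀ k v) ≠ 0)
        (Finset.univ.filter fun v => x (ins i₀ (k - 1) v) ≠ 0)
      omega
    have hB3a : ∀ k : ZMod (n i₀),
        (Finset.univ.filter fun v => x (ins i₀ k v) ≠ 0).card = 0 →
        (Finset.univ.filter fun v => x (ins i₀ (k - 1) v) ≠ 0).card = 0 →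
        (Finset.univ.filter fun v => x (ins i₀ (k + 1) v) ≠ 0).card ≤
          (Finset.univ.filter fun v =>
            x (ins i₀ k v) ≠ 0 ∨ zop n x (ins i₀ k v) ≠ 0).card := by
      intro k h0 h1
      have hz0 : ∀ v, x (ins i₀ k v) = 0 := (haz k).mp h0
      have hz1 : ∀ v, x (ins i₀ (k - 1) v) = 0 := (haz _).mp h1
      apply Finset.card_le_card
      intro v hv
      have hvx : x (ins i₀ (k + 1) v) ≠ 0 := (Finset.mem_filter.mp hv).2
      refine Finset.mem_filter.mpr ⟨Finset.mem_univ _, Or.inr ?_⟩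
      rw [zsplit i₀ x k v]
      have hzop' : zop (fun j : {j : ι // j ≠ i₀} => n j.1)
          (fun v' => x (ins i₀ k v')) v = 0 := by
        unfold zop
        exact Finset.sum_eq_zero (fun j _ => by simp [hz0])
      rw [hz1 v, hzop', add_zero, add_zero]
      exact hvx
    have hB3b : ∀ k : ZMod (n i₀),
        (Finset.univ.filter fun v => x (ins i₀ k v) ≠ 0).card = 0 →
        (Finset.univ.filter fun v => x (ins i₀ (k + 1) v) ≠ 0).card = 0 →
        (Finset.univ.filter fun v => x (ins i₀ (k - 1) v) ≠ 0).card ≤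
          (Finset.univ.filter fun v =>
            x (ins i₀ k v) ≠ 0 ∨ zop n x (ins i₀ k v) ≠ 0).card := by
      intro k h0 h1
      have hz0 : ∀ v, x (ins i₀ k v) = 0 := (haz k).mp h0
      have hz1 : ∀ v, x (ins i₀ (k + 1) v) = 0 := (haz _).mp h1
      apply Finset.card_le_card
      intro v hv
      have hvx : x (ins i₀ (k - 1) v) ≠ 0 := (Finset.mem_filter.mp hv).2
      refine Finset.mem_filter.mpr ⟨Finset.mem_univ _, Or.inr ?_⟩
      rw [zsplit i₀ x k v]
      have hzop' : zop (fun j : {j : ι // j ≠ i₀} => n j.1)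
          (fun v' => x (ins i₀ k v')) v = 0 := by
        unfold zop
        exact Finset.sum_eq_zero (fun j _ => by simp [hz0])
      rw [hz1 v, hzop', zero_add, add_zero]
      exact hvx
    have hex : ∃ k : ZMod (n i₀),
        0 < (Finset.univ.filter fun v => x (ins i₀ k v) ≠ 0).card := by
      obtain ⟨w₀, hw₀⟩ := Function.ne_iff.mp hx
      refine ⟨w₀ i₀, Finset.card_pos.mpr ⟨fun j => w₀ j.1, ?_⟩⟩
      refine Finset.mem_filter.mpr ⟨Finset.mem_univ _, ?_⟩
      have hri : ins i₀ (w₀ i₀) (fun j => w₀ j.1) = w₀ := (insEquiv i₀).right_inv w₀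
      rw [hri]
      exact hw₀
    have key := layerMain (m := n i₀) (hn i₀) N
      (fun k => (Finset.univ.filter fun v => x (ins i₀ k v) ≠ 0).card)
      (fun k => (Finset.univ.filter fun v =>
        x (ins i₀ k v) ≠ 0 ∨ zop n x (ins i₀ k v) ≠ 0).card)
      hB2 hB1 hB3a hB3b hex
    rw [hcι, card_filter_layers i₀ (fun w => x w ≠ 0 ∨ zop n x w ≠ 0)]
    exact key

lemma one_ne {m : ℕ} (hm : 8 ≤ m) : (1 : ZMod m) ≠ 0 := by
  have := num_ne hm (c := 1) (by norm_num) (by norm_num)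
  simpa using this

lemma two_ne {m : ℕ} (hm : 8 ≤ m) : (2 : ZMod m) ≠ 0 := by
  have := num_ne hm (c := 2) (by norm_num) (by norm_num)
  simpa using this

lemma vecMul_lattice_eq {D : ℕ} (n : Fin D → ℕ) [∀ i, NeZero (n i)] (hn : ∀ i, 8 ≤ n i)
    (x : (∀ i, ZMod (n i)) → ZMod 2) (w : ∀ i, ZMod (n i)) :
    Matrix.vecMul x (latticeMatrix n) w = zop n x w := by
  classical
  have hv : Matrix.vecMul x (latticeMatrix n) w = ∑ u, x u * latticeMatrix n u w := by
    simp [Matrix.vecMul, dotProduct]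
  set P : (∀ i, ZMod (n i)) → Prop :=
    fun u => ∃ i, (w i = u i + 1 ∨ w i = u i - 1) ∧ ∀ j, j ≠ i → w j = u j with hP
  have hlat : ∀ u, latticeMatrix n u w = if P u then 1 else 0 := by
    intro u
    unfold latticeMatrix
    congr 1
  rw [hv]
  have h1 : ∑ u, x u * latticeMatrix n u w = ∑ u ∈ Finset.univ.filter P, x u := by
    rw [Finset.sum_filter]
    apply Finset.sum_congr rfl
    intro u _
    rw [hlat u]
    by_cases h : P u
    · rw [if_pos h, if_pos h, mul_one]
    · rw [if_neg h, if_neg h, mul_zero]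
  rw [h1]
  set g : Fin D × Bool → (∀ i, ZMod (n i)) :=
    fun p => Function.update w p.1 (w p.1 + cond p.2 1 (-1)) with hg
  have hcoef : ∀ (i : Fin D) (b : Bool), w i + cond b 1 (-1) ≠ w i := by
    intro i b
    cases b
    · intro h
      have h2 : (-1 : ZMod (n i)) = 0 := by
        have := add_left_cancel (a := w i) (b := (-1 : ZMod (n i))) (c := 0)
        apply this
        rw [add_zero]
        exact h
      exact one_ne (hn i) (by rwa [← neg_eq_zero])
    · intro h
      have h2 : (1 : ZMod (n i)) = 0 := by
        have := add_left_cancel (a := w i) (b := (1 : ZMod (n i))) (c := 0)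
        apply this
        rw [add_zero]
        exact h
      exact one_ne (hn i) h2
  have hginj : ∀ p ∈ (Finset.univ : Finset (Fin D × Bool)), ∀ q ∈ Finset.univ,
      g p = g q → p = q := by
    rintro ⟨i, b⟩ - ⟨j, c⟩ - hpq
    by_cases hij : i = j
    · subst hij
      have := congrFun hpq i
      simp only [hg, Function.update_self] at this
      have hbc : cond b (1 : ZMod (n i)) (-1) = cond c 1 (-1) := by
        exact add_left_cancel this
      cases b <;> cases c
      · rfl
      · exfalso
        simp only [cond_true, cond_false] at hbc
        exact two_ne (hn i) (by linear_combination -hbc)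
      · exfalso
        simp only [cond_true, cond_false] at hbc
        exact two_ne (hn i) (by linear_combination hbc)
      · rfl
    · exfalso
      have := congrFun hpq i
      simp only [hg] at this
      rw [Function.update_self, Function.update_of_ne hij] at this
      exact hcoef i b this
  have himg : Finset.univ.filter P = Finset.image g Finset.univ := by
    ext u
    simp only [Finset.mem_filter, Finset.mem_univ, true_and, Finset.mem_image]
    constructor
    · rintro ⟨i, hor, hoth⟩
      rcases hor with h1 | h1
      · refine ⟨(i, false), ?_⟩
        funext j
        by_cases hj : j = i
        · subst hj
          simp only [hg, Function.update_self, cond_false]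
          rw [h1]
          ring
        · simp only [hg]
          rw [Function.update_of_ne hj]
          exact hoth j hj
      · refine ⟨(i, true), ?_⟩
        funext j
        by_cases hj : j = i
        · subst hj
          simp only [hg, Function.update_self, cond_true]
          rw [h1]
          ring
        · simp only [hg]
          rw [Function.update_of_ne hj]
          exact hoth j hj
    · rintro ⟨⟨i, b⟩, rfl⟩
      cases b
      · refine ⟨i, Or.inl ?_, fun j hj => ?_⟩
        · simp only [hg, Function.update_self, cond_false]
          ring
        · simp only [hg]
          rw [Function.update_of_ne hj]
      · refine ⟨i, Or.inr ?_, fun j hj => ?_⟩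
        · simp only [hg, Function.update_self, cond_true]
          ring
        · simp only [hg]
          rw [Function.update_of_ne hj]
  rw [himg, Finset.sum_image hginj, Fintype.sum_prod_type]
  unfold zop
  apply Finset.sum_congr rfl
  intro i _
  rw [Fintype.sum_bool]
  simp only [hg, cond_true, cond_false]
  rw [← sub_eq_add_neg]

lemma weight_zop_le (x : (∀ i, ZMod (n i)) → ZMod 2) [∀ i, NeZero (n i)] :
    (Finset.univ.filter fun w => zop n x w ≠ 0).card ≤
      2 * Fintype.card ι * (Finset.univ.filter fun w => x w ≠ 0).card := by
  classical
  set S := Finset.univ.filter fun w => x w ≠ 0 with hS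
  have hsub : (Finset.univ.filter fun w => zop n x w ≠ 0) ⊆
      (Finset.univ : Finset (ι × Bool)).biUnion
        (fun p => S.image (fun a => Function.update a p.1 (a p.1 + cond p.2 1 (-1)))) := by
    intro w hw
    have hz : zop n x w ≠ 0 := (Finset.mem_filter.mp hw).2
    have hterm : ∃ i, x (Function.update w i (w i + 1)) + x (Function.update w i (w i - 1)) ≠ 0 := by
      by_contra h
      push_neg at h
      exact hz (Finset.sum_eq_zero (fun i _ => h i))
    obtain ⟨i, hi⟩ := hterm
    have hcase : x (Function.update w i (w i + 1)) ≠ 0 ∨ x (Function.update w i (w i - 1)) ≠ 0 := by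
      by_contra h
      push_neg at h
      rw [h.1, h.2, add_zero] at hi
      exact hi rfl
    rw [Finset.mem_biUnion]
    rcases hcase with h1 | h1
    · refine ⟨(i, false), Finset.mem_univ _, ?_⟩
      rw [Finset.mem_image]
      refine ⟨Function.update w i (w i + 1), Finset.mem_filter.mpr ⟨Finset.mem_univ _, h1⟩, ?_⟩
      simp only [cond_false, Function.update_self]
      rw [Function.update_idem, ← sub_eq_add_neg, add_sub_cancel_right, Function.update_eq_self]
    · refine ⟨(i, true), Finset.mem_univ _, ?_⟩
      rw [Finset.mem_image]
      refine ⟨Function.update w i (w i - 1), Finset.mem_filter.mpr ⟨Finset.mem_univ _, h1⟩, ?_⟩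
      simp only [cond_true, Function.update_self]
      rw [Function.update_idem, sub_add_cancel, Function.update_eq_self]
  calc (Finset.univ.filter fun w => zop n x w ≠ 0).card
      ≤ _ := Finset.card_le_card hsub
    _ ≤ ∑ p : ι × Bool, (S.image (fun a => Function.update a p.1 (a p.1 + cond p.2 1 (-1)))).card :=
        Finset.card_biUnion_le
    _ ≤ ∑ _p : ι × Bool, S.card := Finset.sum_le_sum (fun p _ => Finset.card_image_le)
    _ = Fintype.card (ι × Bool) * S.card := by rw [Finset.sum_const, Finset.card_univ, smul_eq_mul]
    _ = 2 * Fintype.card ι * S.card := by rw [Fintype.card_prod, Fintype.card_bool]; ring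


end LCWS


theorem stmt_2 (D : ℕ) (hD : 1 ≤ D) (n : Fin D → ℕ) (hn : ∀ i, 8 ≤ n i)
    [∀ i, NeZero (n i)]
    (C : Submodule (ZMod 2) ((∀ i, ZMod (n i)) → ZMod 2))
    (hC : ∀ c ∈ C, c ≠ 0 → 2 * D * (2 * D + 1) < hWeight c) :
    ∀ x : (∀ i, ZMod (n i)) → ZMod 2, ∀ c ∈ C,
      ¬(x = 0 ∧ Matrix.vecMul x (latticeMatrix n) + c = 0) →
      2 * D + 1 ≤ sympWeight x (Matrix.vecMul x (latticeMatrix n) + c) := by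
  intro x c hcC hnz
  have hzopeq : Matrix.vecMul x (latticeMatrix n) = LCWS.zop n x :=
    funext (LCWS.vecMul_lattice_eq n hn x)
  by_cases hx : x = 0
  · have hc0 : Matrix.vecMul x (latticeMatrix n) + c = c := by
      rw [hx, Matrix.zero_vecMul, zero_add]
    have hcne : c ≠ 0 := by
      intro h
      exact hnz ⟨hx, by rw [hc0, h]⟩
    have hCc := hC c hcC hcne
    have hsymp : hWeight c ≤ sympWeight x (Matrix.vecMul x (latticeMatrix n) + c) := by
      rw [hc0]
      unfold sympWeight hWeight
      exact Finset.card_le_card (Finset.monotone_filter_right _ (fun j _ hj => Or.inr hj))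
    have hD1 : 2 * D + 1 ≤ 2 * D * (2 * D + 1) :=
      Nat.le_mul_of_pos_left (2 * D + 1) (by omega)
    linarith
  · by_cases hcz : c = 0
    · rw [hcz, add_zero, hzopeq]
      unfold sympWeight
      have hcore := LCWS.coreAux (Fintype.card (Fin D)) (Fin D) n hn x le_rfl hx
      rwa [Fintype.card_fin] at hcore
    · by_cases hbig : 2 * D + 1 ≤ hWeight x
      · refine le_trans hbig ?_
        unfold sympWeight hWeight
        exact Finset.card_le_card (Finset.monotone_filter_right _ (fun j _ hj => Or.inl hj))
      · push_neg at hbig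
        have hwz : hWeight (Matrix.vecMul x (latticeMatrix n) + c) ≤
            sympWeight x (Matrix.vecMul x (latticeMatrix n) + c) := by
          unfold sympWeight hWeight
          exact Finset.card_le_card (Finset.monotone_filter_right _ (fun j _ hj => Or.inr hj))
        have hwA : hWeight (Matrix.vecMul x (latticeMatrix n)) ≤ 2 * D * hWeight x := by
          rw [hzopeq]
          unfold hWeight
          have h := LCWS.weight_zop_le (n := n) x
          rwa [Fintype.card_fin] at h
        have hsubadd : hWeight c ≤ hWeight (Matrix.vecMul x (latticeMatrix n) + c) +
            hWeight (Matrix.vecMul x (latticeMatrix n)) := by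
          unfold hWeight
          refine le_trans (Finset.card_le_card ?_) (Finset.card_union_le _ _)
          intro j hj
          have hcj : c j ≠ 0 := (Finset.mem_filter.mp hj).2
          rw [Finset.mem_union, Finset.mem_filter, Finset.mem_filter]
          by_cases h1 : (Matrix.vecMul x (latticeMatrix n) + c) j ≠ 0
          · exact Or.inl ⟨Finset.mem_univ _, h1⟩
          · push_neg at h1
            right
            refine ⟨Finset.mem_univ _, ?_⟩
            intro h2
            apply hcj
            have h3 : (Matrix.vecMul x (latticeMatrix n) + c) j =
                Matrix.vecMul x (latticeMatrix n) j + c j := rfl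
            rw [h1, h2, zero_add] at h3
            exact h3.symm
        have hCc := hC c hcC hcz
        have hmul : 2 * D * hWeight x ≤ 2 * D * (2 * D) :=
          Nat.mul_le_mul_left _ (by omega)
        have hexp : 2 * D * (2 * D + 1) = 2 * D * (2 * D) + 2 * D := by ring
        linarith
end

section
/- Let r ≥ 2, n = 2^{2r} − 1, b = (2^{2r} − 1)/3, and let α be a primitive element of the finite field GF(2^{2r}) with the property that there is no natural number ℓ with ℓ ≡ 2 (mod 3) and α^ℓ = 1 + α. Let C_r = {c ∈ F₂ⁿ : Σ_{i=0}^{n−1} c_i α^i = 0 and Σ_{i=0}^{n−1} c_i α^{bi} = 0}, where the bits c_i ∈ {0,1} are lifted to GF(2^{2r}). Let A be the adjacency matrix over F₂ of the cycle graph on vertex set ℤ/nℤ (i and j adjacent iff i − j ≡ ±1 mod n). Then for every x ∈ F₂ⁿ and every c ∈ C_r with (x, xA + c) ≠ (0,0), the symplectic weight of (x, xA + c) is at least 3. -/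
open Matrix

/-- Adjacency matrix (over F₂) of the cycle graph on ℤ/nℤ:
`i` and `j` are adjacent iff they differ by ±1 mod n. -/
def cycleMatrix (n : ℕ) [NeZero n] : Matrix (ZMod n) (ZMod n) (ZMod 2) :=
  fun i j => if j = i + 1 ∨ j = i - 1 then 1 else 0

theorem stmt_4 (r : ℕ) (hr : 2 ≤ r) (n : ℕ) (hn : n = 2 ^ (2 * r) - 1) [NeZero n]
    (b : ℕ) (hb : b = n / 3)
    (α : GaloisField 2 (2 * r)) (hα : IsPrimitiveRoot α (2 ^ (2 * r) - 1))
    (hlog : ¬∃ ℓ : ℕ, ℓ % 3 = 2 ∧ α ^ ℓ = 1 + α) :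
    ∀ x c : ZMod n → ZMod 2,
      (∑ i : ZMod n, algebraMap (ZMod 2) (GaloisField 2 (2 * r)) (c i) * α ^ i.val = 0) →
      (∑ i : ZMod n, algebraMap (ZMod 2) (GaloisField 2 (2 * r)) (c i) * α ^ (b * i.val) = 0) →
      ¬(x = 0 ∧ Matrix.vecMul x (cycleMatrix n) + c = 0) →
      3 ≤ sympWeight x (Matrix.vecMul x (cycleMatrix n) + c) := by
  intro x c hc1 hc2 hne
  set φ := algebraMap (ZMod 2) (GaloisField 2 (2 * r)) with hφ
  set z := Matrix.vecMul x (cycleMatrix n) + c with hzdef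
  by_contra hlt
  push_neg at hlt
  -- basic arithmetic facts
  have hpow3 : (2:ℕ) ^ (2*r) % 3 = 1 := by
    rw [pow_mul, Nat.pow_mod]; norm_num
  have h16 : 16 ≤ 2 ^ (2*r) := by
    calc (16:ℕ) = 2^4 := by norm_num
    _ ≤ 2^(2*r) := Nat.pow_le_pow_right (by norm_num) (by omega)
  have hn15 : 15 ≤ n := by omega
  have h3b : 3 * b = n := by omega
  haveI : Fact (1 < n) := ⟨by omega⟩
  haveI : Fact (Nat.Prime 3) := ⟨by norm_num⟩
  -- order facts for α
  have hord : orderOf α = n := by rw [hn]; exact hα.eq_orderOf.symm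
  have hα1 : α ^ n = 1 := by
    have := hα.pow_eq_one; rw [← hn] at this; exact this
  have hα0 : α ≠ 0 := by
    intro h; rw [h, zero_pow (by omega : n ≠ 0)] at hα1; exact zero_ne_one hα1
  have hαne1 : α ≠ 1 := by
    intro h; rw [h, orderOf_one] at hord; omega
  have hα3 : α ^ 3 ≠ 1 := by
    intro h
    have hd := orderOf_dvd_of_pow_eq_one h
    rw [hord] at hd
    have := Nat.le_of_dvd (by norm_num) hd
    omega
  -- characteristic two
  have hchar : (2 : GaloisField 2 (2 * r)) = 0 := by
    have h1 : (2 : GaloisField 2 (2 * r)) = φ 2 := (map_ofNat φ 2).symm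
    rw [h1, show (2 : ZMod 2) = 0 from rfl, map_zero]
  have hK1 : α^2 + α + 1 ≠ 0 := by
    intro h
    apply hα3
    linear_combination (α+1) * h - (α^2+α+1) * hchar
  have hα2 : α^2 + 1 ≠ 0 := by
    intro h
    have hsq : (α+1)^2 = 0 := by linear_combination h + α * hchar
    have h2 : α + 1 = 0 := by
      have := pow_eq_zero_iff (n := 2) (by norm_num) |>.mp hsq
      exact this
    exact hαne1 (by linear_combination h2 - hchar)
  have hone : (1 : GaloisField 2 (2*r)) + α ≠ 0 := by
    intro h; exact hαne1 (by linear_combination h - hchar)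
  -- discrete log: every nonzero element is a power of α
  have huord : orderOf (Units.mk0 α hα0) = n := by
    calc orderOf (Units.mk0 α hα0)
        = orderOf ((Units.mk0 α hα0 : (GaloisField 2 (2*r))ˣ) : GaloisField 2 (2*r)) :=
          (orderOf_units).symm
      _ = orderOf α := by rw [Units.val_mk0]
      _ = n := hord
  have hcardF : Nat.card (GaloisField 2 (2*r)) = 2 ^ (2*r) := GaloisField.card 2 (2*r) (by omega)
  have hsurj : ∃ ℓ : ℕ, α ^ ℓ = 1 + α := by
    have h2 : Nat.card (GaloisField 2 (2*r))ˣ = n := by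
      rw [Nat.card_units, hcardF, hn]
    have h3 : Subgroup.zpowers (Units.mk0 α hα0) = ⊤ :=
      Subgroup.eq_top_of_card_eq _ (by rw [Nat.card_zpowers, huord, h2])
    have h4 : Units.mk0 (1+α) hone ∈ Subgroup.zpowers (Units.mk0 α hα0) := by
      rw [h3]; exact Subgroup.mem_top _
    rw [← mem_powers_iff_mem_zpowers, Submonoid.mem_powers_iff] at h4
    obtain ⟨ℓ, hℓ⟩ := h4
    refine ⟨ℓ, ?_⟩
    have := congrArg (Units.val) hℓ
    simpa using this
  obtain ⟨ℓ₀, hℓ₀⟩ := hsurj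
  -- modular exponent lemmas
  have hmod : ∀ (γ : GaloisField 2 (2*r)), γ ^ n = 1 → ∀ m : ℕ, γ ^ m = γ ^ (m % n) := by
    intro γ hγ m
    conv_lhs => rw [← Nat.div_add_mod m n]
    rw [pow_add, pow_mul, hγ, one_pow, one_mul]
  have hshift : ∀ (γ : GaloisField 2 (2*r)), γ ^ n = 1 →
      ∀ k : ZMod n, γ ^ (k+1).val = γ ^ k.val * γ := by
    intro γ hγ k
    rw [ZMod.val_add, ZMod.val_one, ← hmod γ hγ, pow_succ]
  -- β facts
  set β := α ^ b with hβdef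
  have hβn : β ^ n = 1 := by rw [hβdef, ← pow_mul, pow_mul', hα1, one_pow]
  have hβ3 : β ^ 3 = 1 := by
    have hb3 : b * 3 = n := by omega
    rw [hβdef, ← pow_mul, hb3, hα1]
  have hβne1 : β ≠ 1 := by
    intro h
    have hd := orderOf_dvd_of_pow_eq_one (hβdef ▸ h : α ^ b = 1)
    rw [hord] at hd
    have := Nat.le_of_dvd (by omega) hd
    omega
  have hβ0 : β ≠ 0 := pow_ne_zero _ hα0
  have hβord : orderOf β = 3 := orderOf_eq_prime hβ3 hβne1
  have hβq : β^2 + β + 1 = 0 := by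
    have h' : (β+1) * (β^2+β+1) = 0 := by
      linear_combination hβ3 + (β^2+β+1) * hchar
    rcases mul_eq_zero.mp h' with h|h
    · exact absurd (by linear_combination h - hchar : β = 1) hβne1
    · exact h
  -- lifting power equalities to congruences
  have hliftα : ∀ a' b' : ℕ, α ^ a' = α ^ b' → a' % n = b' % n := by
    intro a' b' h
    have hu : (Units.mk0 α hα0) ^ a' = (Units.mk0 α hα0) ^ b' := by
      apply Units.ext
      rw [Units.val_pow_eq_pow_val, Units.val_pow_eq_pow_val, Units.val_mk0]
      exact h
    have := pow_eq_pow_iff_modEq.mp hu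
    rw [huord] at this
    exact this
  have huβord : orderOf (Units.mk0 β hβ0) = 3 := by
    calc orderOf (Units.mk0 β hβ0)
        = orderOf ((Units.mk0 β hβ0 : (GaloisField 2 (2*r))ˣ) : GaloisField 2 (2*r)) :=
          (orderOf_units).symm
      _ = orderOf β := by rw [Units.val_mk0]
      _ = 3 := hβord
  have hliftβ : ∀ a' b' : ℕ, β ^ a' = β ^ b' → a' % 3 = b' % 3 := by
    intro a' b' h
    have hu : (Units.mk0 β hβ0) ^ a' = (Units.mk0 β hβ0) ^ b' := by
      apply Units.ext
      rw [Units.val_pow_eq_pow_val, Units.val_pow_eq_pow_val, Units.val_mk0]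
      exact h
    have := pow_eq_pow_iff_modEq.mp hu
    rw [huβord] at this
    exact this
  -- the key log-based contradiction
  have hlogAB : ∀ i' j' : ZMod n, β ^ i'.val = β ^ j'.val →
      α ^ j'.val * α = α ^ i'.val * (α^2+1) → False := by
    intro i' j' hp he
    have hsq2 : (1+α)^2 = α^2+1 := by linear_combination α * hchar
    have h2 : α ^ (j'.val+1) = α ^ (i'.val + ℓ₀*2) := by
      calc α ^ (j'.val+1) = α ^ j'.val * α := pow_succ α _
        _ = α ^ i'.val * (α^2+1) := he
        _ = α ^ i'.val * (1+α)^2 := by rw [hsq2]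
        _ = α ^ i'.val * (α^ℓ₀)^2 := by rw [hℓ₀]
        _ = α ^ (i'.val + ℓ₀*2) := by rw [pow_add, pow_mul]
    have h3 := hliftα _ _ h2
    have h4 : (j'.val + 1) % 3 = (i'.val + ℓ₀*2) % 3 := by
      have hdvd : (3:ℕ) ∣ n := ⟨b, h3b.symm⟩
      exact Nat.ModEq.of_dvd hdvd h3
    have h5 : i'.val % 3 = j'.val % 3 := hliftβ _ _ hp
    exact hlog ⟨ℓ₀, by omega, hℓ₀⟩
  -- the vecMul computation
  have hw : ∀ j : ZMod n, Matrix.vecMul x (cycleMatrix n) j = x (j-1) + x (j+1) := by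
    intro j
    have h2ne : (j - 1 : ZMod n) ≠ j + 1 := by
      intro h
      have h2 : ((2:ℕ) : ZMod n) = 0 := by push_cast; linear_combination -h
      rw [ZMod.natCast_eq_zero_iff] at h2
      have := Nat.le_of_dvd (by norm_num) h2
      omega
    have hstep : ∀ i : ZMod n, x i * cycleMatrix n i j
        = if i ∈ ({j-1, j+1} : Finset (ZMod n)) then x i else 0 := by
      intro i
      have hcond : (j = i + 1 ∨ j = i - 1) ↔ (i ∈ ({j-1, j+1} : Finset (ZMod n))) := by
        simp only [Finset.mem_insert, Finset.mem_singleton]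
        constructor
        · rintro (rfl|rfl)
          · left; ring
          · right; ring
        · rintro (rfl|rfl)
          · left; ring
          · right; ring
      simp only [cycleMatrix, mul_ite, mul_one, mul_zero]
      exact if_congr hcond rfl rfl
    calc Matrix.vecMul x (cycleMatrix n) j = ∑ i : ZMod n, x i * cycleMatrix n i j := by
          simp [Matrix.vecMul, dotProduct]
      _ = ∑ i : ZMod n, if i ∈ ({j-1, j+1} : Finset (ZMod n)) then x i else 0 :=
          Finset.sum_congr rfl (fun i _ => hstep i)
      _ = ∑ i ∈ ({j-1, j+1} : Finset (ZMod n)), x i := by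
          rw [Finset.sum_ite_mem, Finset.univ_inter]
      _ = x (j-1) + x (j+1) := Finset.sum_pair h2ne
  have hzj : ∀ j : ZMod n, z j = (x (j-1) + x (j+1)) + c j := by
    intro j
    rw [hzdef, Pi.add_apply, hw j]
  -- the main sum identity
  have hsum : ∀ (γ : GaloisField 2 (2*r)), γ ^ n = 1 →
      (∑ i : ZMod n, φ (c i) * γ ^ i.val = 0) →
      ∑ j : ZMod n, φ (z j) * γ ^ j.val
        = ∑ k : ZMod n, φ (x k) * (γ ^ (k+1).val + γ ^ (k-1).val) := by
    intro γ hγ hcγ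
    have e1 : ∀ j : ZMod n, φ (z j) * γ ^ j.val
        = φ (x (j-1)) * γ ^ j.val + φ (x (j+1)) * γ ^ j.val + φ (c j) * γ ^ j.val := by
      intro j
      rw [hzj j, map_add, map_add, add_mul, add_mul]
    rw [Finset.sum_congr rfl (fun j _ => e1 j), Finset.sum_add_distrib,
      Finset.sum_add_distrib, hcγ, add_zero]
    have e2 : ∑ j : ZMod n, φ (x (j-1)) * γ ^ j.val
        = ∑ k : ZMod n, φ (x k) * γ ^ (k+1).val := by
      refine (Fintype.sum_equiv (Equiv.addRight (1 : ZMod n))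
        (fun k => φ (x k) * γ ^ (k+1).val) (fun j => φ (x (j-1)) * γ ^ j.val) ?_).symm
      intro k
      simp [Equiv.addRight]
    have e3 : ∑ j : ZMod n, φ (x (j+1)) * γ ^ j.val
        = ∑ k : ZMod n, φ (x k) * γ ^ (k-1).val := by
      refine (Fintype.sum_equiv (Equiv.subRight (1 : ZMod n))
        (fun k => φ (x k) * γ ^ (k-1).val) (fun j => φ (x (j+1)) * γ ^ j.val) ?_).symm
      intro k
      simp [Equiv.subRight]
    rw [e2, e3, ← Finset.sum_add_distrib]
    exact Finset.sum_congr rfl (fun k _ => by ring)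
  have hc2' : ∑ i : ZMod n, φ (c i) * β ^ i.val = 0 := by
    rw [← hc2]
    exact Finset.sum_congr rfl (fun i _ => by rw [hβdef, ← pow_mul])
  -- the two scalar equations
  have E1 : (∑ j : ZMod n, φ (z j) * α ^ j.val) * α
      = (∑ k : ZMod n, φ (x k) * α ^ k.val) * (α^2+1) := by
    rw [hsum α hα1 hc1, Finset.sum_mul, Finset.sum_mul]
    refine Finset.sum_congr rfl (fun k _ => ?_)
    have h1 : α ^ (k+1).val = α ^ k.val * α := hshift α hα1 k
    have h2 : α ^ (k-1).val * α = α ^ k.val := by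
      rw [← hshift α hα1 (k-1)]
      congr 1
      congr 1
      ring
    linear_combination φ (x k) * α * h1 + φ (x k) * h2
  have E2 : (∑ j : ZMod n, φ (z j) * β ^ j.val) * β
      = (∑ k : ZMod n, φ (x k) * β ^ k.val) * β := by
    rw [hsum β hβn hc2', Finset.sum_mul, Finset.sum_mul]
    refine Finset.sum_congr rfl (fun k _ => ?_)
    have h1 : β ^ (k+1).val = β ^ k.val * β := hshift β hβn k
    have h2 : β ^ (k-1).val * β = β ^ k.val := by
      rw [← hshift β hβn (k-1)]
      congr 1
      congr 1
      ring
    linear_combination φ (x k) * β * h1 + φ (x k) * h2 + φ (x k) * β^(k.val) * hβq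
      - φ (x k) * β^(k.val) * β * hchar
  have E2' : (∑ j : ZMod n, φ (z j) * β ^ j.val)
      = (∑ k : ZMod n, φ (x k) * β ^ k.val) := mul_right_cancel₀ hβ0 E2
  -- support extraction
  have hcS : (Finset.univ.filter fun j => x j ≠ 0 ∨ z j ≠ 0).card ≤ 2 := by
    have : sympWeight x z < 3 := hlt
    unfold sympWeight at this
    omega
  obtain ⟨i, j, hij, hout⟩ :
      ∃ i j : ZMod n, i ≠ j ∧ ∀ k : ZMod n, k ≠ i → k ≠ j → (x k = 0 ∧ z k = 0) := by
    set S := Finset.univ.filter (fun k : ZMod n => x k ≠ 0 ∨ z k ≠ 0) with hS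
    have hmem : ∀ k, k ∉ S → x k = 0 ∧ z k = 0 := by
      intro k hk
      simp only [hS, Finset.mem_filter, Finset.mem_univ, true_and, not_or, not_not] at hk
      exact hk
    have hc012 : S.card = 0 ∨ S.card = 1 ∨ S.card = 2 := by omega
    rcases hc012 with h|h|h
    · refine ⟨0, 1, ?_, ?_⟩
      · exact zero_ne_one
      · intro k _ _
        apply hmem
        rw [Finset.card_eq_zero.mp h]
        exact Finset.notMem_empty k
    · obtain ⟨a, ha⟩ := Finset.card_eq_one.mp h
      refine ⟨a, a+1, ?_, ?_⟩
      · intro hcon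
        exact one_ne_zero (left_eq_add.mp hcon)
      · intro k hk _
        apply hmem
        rw [ha, Finset.mem_singleton]
        exact hk
    · obtain ⟨a, a', haa, ha⟩ := Finset.card_eq_two.mp h
      refine ⟨a, a', haa, ?_⟩
      intro k hk hk'
      apply hmem
      rw [ha, Finset.mem_insert, Finset.mem_singleton]
      push_neg
      exact ⟨hk, hk'⟩
  -- two-term reduction
  have htt : ∀ (w : ZMod n → ZMod 2) (t : ZMod n → GaloisField 2 (2*r)),
      (∀ k, k ≠ i → k ≠ j → w k = 0) →
      ∑ k : ZMod n, φ (w k) * t k = φ (w i) * t i + φ (w j) * t j := by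
    intro w t hwz
    refine (Finset.sum_subset (Finset.subset_univ ({i,j} : Finset (ZMod n))) ?_).symm.trans
      (Finset.sum_pair hij)
    intro k _ hk
    simp only [Finset.mem_insert, Finset.mem_singleton] at hk
    push_neg at hk
    rw [hwz k hk.1 hk.2, map_zero, zero_mul]
  have hxout : ∀ k, k ≠ i → k ≠ j → x k = 0 := fun k h1 h2 => (hout k h1 h2).1
  have hzout : ∀ k, k ≠ i → k ≠ j → z k = 0 := fun k h1 h2 => (hout k h1 h2).2
  have E1' : (φ (z i) * α ^ i.val + φ (z j) * α ^ j.val) * α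
      = (φ (x i) * α ^ i.val + φ (x j) * α ^ j.val) * (α^2+1) := by
    rw [← htt x (fun k => α ^ k.val) hxout, ← htt z (fun k => α ^ k.val) hzout]
    exact E1
  have E2'' : φ (z i) * β ^ i.val + φ (z j) * β ^ j.val
      = φ (x i) * β ^ i.val + φ (x j) * β ^ j.val := by
    rw [← htt x (fun k => β ^ k.val) hxout, ← htt z (fun k => β ^ k.val) hzout]
    exact E2'
  -- nonvanishing facts
  have hαp0 : ∀ m : ℕ, α ^ m ≠ 0 := fun m => pow_ne_zero m hα0
  have hβp0 : ∀ m : ℕ, β ^ m ≠ 0 := fun m => pow_ne_zero m hβ0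
  have huv : α ^ i.val ≠ α ^ j.val := by
    intro h
    have h1 := hliftα _ _ h
    have h2 := ZMod.val_lt i
    have h3 := ZMod.val_lt j
    have h4 : i.val = j.val := by
      rwa [Nat.mod_eq_of_lt h2, Nat.mod_eq_of_lt h3] at h1
    exact hij (ZMod.val_injective n h4)
  have huvne : α ^ i.val + α ^ j.val ≠ 0 := by
    intro h
    exact huv (by linear_combination h - α ^ j.val * hchar)
  -- the case bash
  have hzero : x i = 0 ∧ x j = 0 ∧ z i = 0 ∧ z j = 0 := by
    have hcases : ∀ a : ZMod 2, a = 0 ∨ a = 1 := by decide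
    rcases hcases (x i) with hxi | hxi <;> rcases hcases (x j) with hxj | hxj <;>
      rcases hcases (z i) with hzi | hzi <;> rcases hcases (z j) with hzj | hzj <;>
        rw [hxi, hxj, hzi, hzj] at E1' E2'' <;>
          simp only [map_zero, _root_.map_one] at E1' E2''
    -- case (0,0,0,0)
    · exact ⟨hxi, hxj, hzi, hzj⟩
    -- case (0,0,0,1)
    · exact absurd (by linear_combination E1' : α ^ j.val * α = 0)
        (mul_ne_zero (hαp0 _) hα0)
    -- case (0,0,1,0)
    · exact absurd (by linear_combination E1' : α ^ i.val * α = 0)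
        (mul_ne_zero (hαp0 _) hα0)
    -- case (0,0,1,1)
    · exact absurd (by linear_combination E1' : (α ^ i.val + α ^ j.val) * α = 0)
        (mul_ne_zero huvne hα0)
    -- case (0,1,0,0)
    · exact absurd (by linear_combination -E1' : α ^ j.val * (α^2+1) = 0)
        (mul_ne_zero (hαp0 _) hα2)
    -- case (0,1,0,1)
    · exact absurd (by linear_combination -E1' + α ^ j.val * α * hchar :
        (α^2+α+1) * α ^ j.val = 0) (mul_ne_zero hK1 (hαp0 _))
    -- case (0,1,1,0)
    · exact absurd (hlogAB j i (by linear_combination -E2'') (by linear_combination E1')) id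
    -- case (0,1,1,1)
    · exact absurd (by linear_combination E2'' : β ^ i.val = 0) (hβp0 _)
    -- case (1,0,0,0)
    · exact absurd (by linear_combination -E1' : α ^ i.val * (α^2+1) = 0)
        (mul_ne_zero (hαp0 _) hα2)
    -- case (1,0,0,1)
    · exact absurd (hlogAB i j (by linear_combination -E2'') (by linear_combination E1')) id
    -- case (1,0,1,0)
    · exact absurd (by linear_combination -E1' + α ^ i.val * α * hchar :
        (α^2+α+1) * α ^ i.val = 0) (mul_ne_zero hK1 (hαp0 _))
    -- case (1,0,1,1)
    · exact absurd (by linear_combination E2'' : β ^ j.val = 0) (hβp0 _)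
    -- case (1,1,0,0)
    · exact absurd (by linear_combination -E1' : (α ^ i.val + α ^ j.val) * (α^2+1) = 0)
        (mul_ne_zero huvne hα2)
    -- case (1,1,0,1)
    · exact absurd (by linear_combination -E2'' : β ^ i.val = 0) (hβp0 _)
    -- case (1,1,1,0)
    · exact absurd (by linear_combination -E2'' : β ^ j.val = 0) (hβp0 _)
    -- case (1,1,1,1)
    · exact absurd (by linear_combination -E1' + (α ^ i.val + α ^ j.val) * α * hchar :
        (α^2+α+1) * (α ^ i.val + α ^ j.val) = 0) (mul_ne_zero hK1 huvne)
  obtain ⟨h1, h2, h3, h4⟩ := hzero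
  apply hne
  constructor
  · funext k
    rw [Pi.zero_apply]
    by_cases hk1 : k = i
    · rw [hk1]; exact h1
    · by_cases hk2 : k = j
      · rw [hk2]; exact h2
      · exact hxout k hk1 hk2
  · show z = 0
    funext k
    rw [Pi.zero_apply]
    by_cases hk1 : k = i
    · rw [hk1]; exact h3
    · by_cases hk2 : k = j
      · rw [hk2]; exact h4
      · exact hzout k hk1 hk2
end

section
/- Let r ≥ 1 and let α be a primitive element of GF(2^{2r}). Then there exists a natural number j with j ≡ 1 (mod 3) and α^j = 1 + α² if and only if there exists a natural number ℓ with ℓ ≡ 2 (mod 3) and α^ℓ = 1 + α. -/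
theorem stmt_8 (r : ℕ) (hr : 1 ≤ r)
    (α : GaloisField 2 (2 * r)) (hα : IsPrimitiveRoot α (2 ^ (2 * r) - 1)) :
    (∃ j : ℕ, j % 3 = 1 ∧ α ^ j = 1 + α ^ 2) ↔
    (∃ ℓ : ℕ, ℓ % 3 = 2 ∧ α ^ ℓ = 1 + α) := by
  have hn : 2 * r ≠ 0 := by omega
  letI : Fintype (GaloisField 2 (2 * r)) := Fintype.ofFinite _
  have hcard : Fintype.card (GaloisField 2 (2 * r)) = 2 ^ (2 * r) :=
    by rw [← Nat.card_eq_fintype_card]; exact GaloisField.card 2 (2 * r) hn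
  have hsq : (1 : GaloisField 2 (2 * r)) + α ^ 2 = (1 + α) ^ 2 := by
    rw [add_pow_char]; simp
  constructor
  · rintro ⟨j, hj3, hj⟩
    refine ⟨j * 2 ^ (2 * r - 1), ?_, ?_⟩
    · have h2 : 2 ^ (2 * r - 1) % 3 = 2 := by
        have he : 2 * r - 1 = 2 * (r - 1) + 1 := by omega
        rw [he, pow_succ, pow_mul, Nat.mul_mod, Nat.pow_mod]
        norm_num
      rw [Nat.mul_mod, hj3, h2]
    · rw [pow_mul, hj, hsq, ← pow_mul]
      have h2 : 2 * 2 ^ (2 * r - 1) = 2 ^ (2 * r) := by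
        rw [← pow_succ']
        congr 1
        omega
      rw [h2, ← hcard, FiniteField.pow_card]
  · rintro ⟨l, hl3, hl⟩
    refine ⟨2 * l, by omega, ?_⟩
    rw [mul_comm 2 l, pow_mul, hl, ← hsq]
end

section
/- For every integer r ≥ 2, there exists a primitive element α of GF(2^{2r}) and a natural number ℓ with ℓ mod 3 ≠ 2 such that α^ℓ = 1 + α. -/
open Finset

/-- A finset of odd naturals, each at least 3, has product at least `∏_{i<k} (2i+3)`. -/
lemma prod_odd_ge (S : Finset ℕ) (hS : ∀ n ∈ S, 3 ≤ n ∧ Odd n) :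
    ∏ i ∈ range S.card, (2 * i + 3) ≤ ∏ n ∈ S, n := by
  induction' hk : S.card with k ih generalizing S
  · simp [Finset.card_eq_zero.mp hk]
  · have hne : S.Nonempty := Finset.card_pos.mp (by omega)
    set m := S.max' hne with hm
    have hmS : m ∈ S := S.max'_mem hne
    have hmax : ∀ x ∈ S, x ≤ m := fun x hx => S.le_max' x hx
    -- m ≥ 2 * S.card + 1
    have hminj : Set.InjOn (· / 2) S := by
      intro a ha b hb hab
      obtain ⟨a2, ha2⟩ := (hS a ha).2
      obtain ⟨b2, hb2⟩ := (hS b hb).2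
      simp only at hab
      omega
    have himg : Finset.image (· / 2) S ⊆ Finset.Icc 1 (m / 2) := by
      intro y hy
      obtain ⟨x, hx, rfl⟩ := Finset.mem_image.mp hy
      have h3 := (hS x hx).1
      have := hmax x hx
      simp only [Finset.mem_Icc]
      omega
    have hcard : S.card ≤ m / 2 := by
      calc S.card = (Finset.image (· / 2) S).card :=
            (Finset.card_image_of_injOn hminj).symm
        _ ≤ (Finset.Icc 1 (m / 2)).card := Finset.card_le_card himg
        _ = m / 2 := by rw [Nat.card_Icc]; omega
    have hmodd : Odd m := (hS m hmS).2
    have hmbig : 2 * S.card + 1 ≤ m := by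
      obtain ⟨t, ht⟩ := hmodd; omega
    have herase : (S.erase m).card = k := by
      rw [Finset.card_erase_of_mem hmS]; omega
    have hrec := ih (S.erase m) (fun n hn => hS n (S.erase_subset m hn)) herase
    calc ∏ i ∈ range (k + 1), (2 * i + 3)
        = (2 * k + 3) * ∏ i ∈ range k, (2 * i + 3) := by
          rw [Finset.prod_range_succ]; ring
      _ ≤ m * ∏ n ∈ S.erase m, n := by
          apply Nat.mul_le_mul _ hrec
          omega
      _ = ∏ n ∈ S, n := Finset.mul_prod_erase S id hmS

lemma pow_lt_prod_odd (k : ℕ) (hk : 3 ≤ k) : 2 ^ (2 * k) < ∏ i ∈ range k, (2 * i + 3) := by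
  induction' k with k ih
  · omega
  · rcases Nat.lt_or_ge k 3 with h | h
    · interval_cases k <;> simp_all <;> norm_num [Finset.prod_range_succ]
    · have := ih h
      rw [Finset.prod_range_succ]
      have : 2 ^ (2 * (k + 1)) = 2 ^ (2 * k) * 4 := by ring
      rw [this]
      have h4 : 4 ≤ 2 * k + 3 := by omega
      calc 2 ^ (2 * k) * 4 < (∏ i ∈ range k, (2 * i + 3)) * 4 := by
            have := ih h; nlinarith
        _ ≤ (∏ i ∈ range k, (2 * i + 3)) * (2 * k + 3) := by
            have : 0 < ∏ i ∈ range k, (2 * i + 3) := by positivity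
            nlinarith
  
/-- For `r ≥ 3`, the number of distinct primes of `N = 2^(2r) - 1` is less than `r`. -/
lemma omega_lt (r : ℕ) (hr : 3 ≤ r) : (2 ^ (2 * r) - 1).primeFactors.card < r := by
  set N := 2 ^ (2 * r) - 1 with hN
  have hNpos : 0 < N := by
    have : 2 ^ (2*r) ≥ 2 ^ 6 := Nat.pow_le_pow_right (by norm_num) (by omega)
    simp only [hN]; omega
  have hNodd : Odd N := by
    have h2 : 2 ∣ 2 ^ (2 * r) := dvd_pow_self 2 (by omega)
    rcases h2 with ⟨t, ht⟩
    refine ⟨t - 1, by omega⟩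
  by_contra hcon
  push_neg at hcon
  set P := N.primeFactors with hP
  have hodd : ∀ p ∈ P, 3 ≤ p ∧ Odd p := by
    intro p hp
    have hpp := Nat.prime_of_mem_primeFactors hp
    have hpd := Nat.dvd_of_mem_primeFactors hp
    have : p ≠ 2 := by
      rintro rfl
      exact (Nat.not_even_iff_odd.mpr hNodd) ((even_iff_two_dvd).mpr hpd)
    constructor
    · have := hpp.two_le; omega
    · rcases Nat.even_or_odd p with he | ho
      · exact absurd ((Nat.Prime.even_iff hpp).mp he) this
      · exact ho
  have h1 : ∏ i ∈ range P.card, (2 * i + 3) ≤ ∏ p ∈ P, p := prod_odd_ge P hodd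
  have h2 : ∏ p ∈ P, p ≤ N := Nat.le_of_dvd hNpos (Nat.prod_primeFactors_dvd N)
  have h3 : ∏ i ∈ range r, (2 * i + 3) ≤ ∏ i ∈ range P.card, (2 * i + 3) := by
    apply Finset.prod_le_prod_of_subset_of_one_le'
    · exact Finset.range_subset_range.mpr hcon
    · intros; omega
  have h4 := pow_lt_prod_odd r hr
  omega

section Key

variable {F : Type*} [Field F] [Fintype F] [DecidableEq F]

lemma conj_jacobiSum' (χ ψ : MulChar F ℂ) :
    (starRingEnd ℂ) (jacobiSum χ ψ) = jacobiSum χ⁻¹ ψ⁻¹ := by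
  have h1 : (starRingEnd ℂ) (jacobiSum χ ψ)
      = jacobiSum (χ.ringHomComp (starRingEnd ℂ)) (ψ.ringHomComp (starRingEnd ℂ)) :=
    (jacobiSum_ringHomComp χ ψ _).symm
  have h2 : χ.ringHomComp (starRingEnd ℂ) = χ⁻¹ := by rw [← MulChar.star_eq_inv]; rfl
  have h3 : ψ.ringHomComp (starRingEnd ℂ) = ψ⁻¹ := by rw [← MulChar.star_eq_inv]; rfl
  rw [h1, h2, h3]

lemma norm_jacobiSum_le' [CharP F 2] {r : ℕ} (hq : Fintype.card F = 2 ^ (2 * r))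
    {χ ψ : MulChar F ℂ} (hψ : ψ ≠ 1) : ‖jacobiSum χ ψ‖ ≤ 2 ^ r := by
  have h2r : (1 : ℝ) ≤ 2 ^ r := one_le_pow₀ (by norm_num)
  rcases eq_or_ne χ 1 with rfl | hχ
  · rw [jacobiSum_one_nontrivial hψ]
    simpa using h2r
  rcases eq_or_ne (χ * ψ) 1 with h1 | h1
  · have hψ' : ψ = χ⁻¹ := eq_inv_of_mul_eq_one_left (by rwa [mul_comm] at h1)
    rw [hψ', jacobiSum_nontrivial_inv hχ]
    have hneg : (-1 : F) = 1 := by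
      have := CharTwo.neg_eq (R := F) 1; simpa using this
    rw [hneg, MulChar.map_one]
    simpa using h2r
  · have hch : ringChar ℂ ≠ ringChar F := by
      rw [ringChar.eq F 2, ringChar.eq ℂ 0]; norm_num
    have key := jacobiSum_mul_jacobiSum_inv hch hχ hψ h1
    rw [← conj_jacobiSum', Complex.mul_conj] at key
    have hnsq : Complex.normSq (jacobiSum χ ψ) = (2 : ℝ) ^ (2 * r) := by
      have : ((Complex.normSq (jacobiSum χ ψ) : ℝ) : ℂ) = ((2 ^ (2*r) : ℕ) : ℂ) := by
        rw [key, hq]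
      exact_mod_cast this
    have habs : ‖jacobiSum χ ψ‖ ^ 2 = ((2:ℝ) ^ r) ^ 2 := by
      rw [Complex.sq_norm]
      rw [hnsq, ← pow_mul, mul_comm r 2]
    nlinarith [norm_nonneg (jacobiSum χ ψ), habs]

set_option maxHeartbeats 2000000 in
lemma key_exists [CharP F 2] (r : ℕ) (hr : 2 ≤ r) (hq : Fintype.card F = 2 ^ (2 * r)) :
    ∃ x : F, orderOf x = 2 ^ (2 * r) - 1 ∧
      (x ^ 2 + x) ^ ((2 ^ (2 * r) - 1) / 3) ≠ 1 := by
  classical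
  set N := 2 ^ (2 * r) - 1 with hNdef
  have hq16 : 16 ≤ 2 ^ (2 * r) := by
    calc (16:ℕ) = 2 ^ 4 := by norm_num
    _ ≤ 2 ^ (2*r) := Nat.pow_le_pow_right (by norm_num) (by omega)
  have hN0 : N ≠ 0 := by omega
  have hN15 : 15 ≤ N := by omega
  have hN3 : 3 ∣ N := by
    have h49 : (2:ℕ) ^ (2 * r) = 4 ^ r := by rw [pow_mul]; norm_num
    have hd := Nat.sub_dvd_pow_sub_pow 4 1 r
    simp only [one_pow] at hd
    rw [hNdef, h49]
    exact hd
  set M := N / 3 with hMdef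
  have hM3 : 3 * M = N := Nat.mul_div_cancel' hN3
  have hM0 : M ≠ 0 := by omega
  have hcardU : Fintype.card Fˣ = N := by rw [Fintype.card_units, hq]
  -- generator of Fˣ
  obtain ⟨g, hg⟩ := IsCyclic.exists_generator (α := Fˣ)
  have hgord : orderOf g = N := by
    rw [orderOf_eq_card_of_forall_mem_zpowers hg, Nat.card_eq_fintype_card, hcardU]
  have hgN : g ^ N = 1 := by rw [← hgord]; exact pow_orderOf_eq_one g
  -- a character of order N
  obtain ⟨Λ, hΛ⟩ := MulChar.exists_mulChar_orderOf F (n := N) (by rw [hq])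
    (Complex.isPrimitiveRoot_exp N hN0)
  have hΛl_one : ∀ l : ℕ, Λ ^ l = 1 ↔ N ∣ l := by
    intro l
    rw [← hΛ]
    exact orderOf_dvd_iff_pow_eq_one.symm
  set z : ℂ := Λ ↑g with hzdef
  have hz : IsPrimitiveRoot z N := by
    rw [IsPrimitiveRoot.iff_def]
    constructor
    · have h1 : (Λ ^ N) ↑g = z ^ N := MulChar.pow_apply' Λ hN0 ↑g
      rw [(hΛl_one N).mpr dvd_rfl] at h1
      rw [← h1]
      exact MulChar.one_apply_coe g
    · intro l hl
      rcases Nat.eq_zero_or_pos l with rfl | hl0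
      · exact dvd_zero N
      · have h1 : (Λ ^ l) ↑g = 1 := by
          rw [MulChar.pow_apply' Λ (by omega) ↑g]; exact hl
        have h2 : Λ ^ l = 1 := by
          rw [MulChar.eq_iff hg]
          rw [h1, MulChar.one_apply_coe]
        exact (hΛl_one l).mp h2
  -- the cubic character
  set c : MulChar F ℂ := Λ ^ M with hcdef
  have hc1 : c ≠ 1 := by
    rw [hcdef, Ne, hΛl_one]
    intro h
    have := Nat.le_of_dvd (by omega) h
    omega
  have hc2 : c ^ 2 ≠ 1 := by
    rw [hcdef, ← pow_mul, Ne, hΛl_one]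
    intro h
    have := Nat.le_of_dvd (by omega) h
    omega
  -- Λ is injective on values: Λ v = 1 → v = 1 (for units)
  have hΛinj : ∀ v : Fˣ, Λ ↑v = 1 → v = 1 := by
    intro v hv
    obtain ⟨t, ht⟩ := (Submonoid.mem_powers_iff v g).mp
      ((isOfFinOrder_of_finite g).mem_powers_iff_mem_zpowers.mpr (hg v))
    rw [← ht] at hv ⊢
    have hzt : z ^ t = 1 := by
      rw [hzdef, ← map_pow, ← Units.val_pow_eq_pow_val]
      exact hv
    obtain ⟨s, hs⟩ := (IsPrimitiveRoot.pow_eq_one_iff_dvd hz t).mp hzt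
    rw [hs, pow_mul, hgN, one_pow]
  -- by contradiction
  by_contra hcon
  push_neg at hcon
  -- hcon : ∀ x, orderOf x = N → (x^2+x)^M = 1
  -- W-values
  have hcval : ∀ y : F, y ≠ 0 → y ^ M = 1 → c y = 1 := by
    intro y hy hyM
    rw [hcdef, MulChar.pow_apply' Λ hM0, ← map_pow, hyM, map_one]
  have hcval2 : ∀ y : F, y ≠ 0 → y ^ M ≠ 1 → c y + (c y) ^ 2 = -1 := by
    intro y hy hyM
    have h3 : (c y) ^ 3 = 1 := by
      have hyN : y ^ N = 1 := by
        have := FiniteField.pow_card_sub_one_eq_one y hy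
        rwa [hq] at this
      rw [hcdef, MulChar.pow_apply' Λ hM0, ← pow_mul, mul_comm M 3, hM3, ← map_pow, hyN,
        map_one]
    have hne1 : c y ≠ 1 := by
      intro h
      apply hyM
      have hyu : IsUnit y := isUnit_iff_ne_zero.mpr hy
      have : Λ (y ^ M) = 1 := by
        rw [map_pow, ← MulChar.pow_apply' Λ hM0, ← hcdef, h]
      have := hΛinj (hyu.unit ^ M) (by
        rw [Units.val_pow_eq_pow_val, IsUnit.unit_spec]; exact this)
      calc y ^ M = ↑(hyu.unit ^ M) := by rw [Units.val_pow_eq_pow_val, IsUnit.unit_spec]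
        _ = 1 := by rw [this, Units.val_one]
    have hfac : (c y - 1) * ((c y)^2 + c y + 1) = 0 := by
      have : (c y - 1) * ((c y)^2 + c y + 1) = (c y)^3 - 1 := by ring
      rw [this, h3, sub_self]
    rcases mul_eq_zero.mp hfac with h | h
    · exact absurd (by linear_combination h) hne1
    · linear_combination h
  -- the weight function
  set W : F → ℂ := fun x => c (x ^ 2 + x) + (c (x ^ 2 + x)) ^ 2 with hWdef
  -- base identity: twisted sums are Jacobi sums
  have hbase : ∀ m : ℕ, ∑ x : F, (Λ ^ m) x * W x
      = jacobiSum (Λ ^ m * c) c + jacobiSum (Λ ^ m * c ^ 2) (c ^ 2) := by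
    intro m
    rw [jacobiSum, jacobiSum, ← Finset.sum_add_distrib]
    apply Finset.sum_congr rfl
    intro x _
    have hsub : (1 : F) - x = 1 + x := CharTwo.sub_eq_add 1 x
    have hfac : x ^ 2 + x = x * (1 + x) := by ring
    simp only [hWdef]
    rw [hfac, map_mul, hsub, MulChar.mul_apply, MulChar.mul_apply,
      MulChar.pow_apply' c two_ne_zero, MulChar.pow_apply' c two_ne_zero]
    ring
  have hbasebound : ∀ m : ℕ, ‖∑ x : F, (Λ ^ m) x * W x‖ ≤ 2 ^ (r + 1) := by
    intro m
    rw [hbase m]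
    calc ‖jacobiSum (Λ ^ m * c) c + jacobiSum (Λ ^ m * c ^ 2) (c ^ 2)‖
        ≤ ‖jacobiSum (Λ ^ m * c) c‖ + ‖jacobiSum (Λ ^ m * c ^ 2) (c ^ 2)‖ := norm_add_le _ _
      _ ≤ 2 ^ r + 2 ^ r := add_le_add (norm_jacobiSum_le' hq hc1) (norm_jacobiSum_le' hq hc2)
      _ = 2 ^ (r + 1) := by ring
  -- the sieve sums
  set Z : ℕ → Finset ℕ → ℂ := fun m S =>
    ∑ x : F, (Λ ^ m) x *
      ((∏ p ∈ S, (((p : ℂ) - 1) - ∑ j ∈ Icc 1 (p - 1), (Λ ^ (j * (N / p))) x)) * W x)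
    with hZdef
  have hZbound : ∀ S : Finset ℕ, (∀ p ∈ S, 2 ≤ p) → ∀ m : ℕ,
      ‖Z m S‖ ≤ (∏ p ∈ S, (2 * ((p : ℝ) - 1))) * 2 ^ (r + 1) := by
    intro S
    induction S using Finset.induction_on with
    | empty =>
      intro _ m
      simp only [hZdef, Finset.prod_empty, one_mul]
      simpa using hbasebound m
    | @insert p S hpS ih =>
      intro hS m
      have hp2 : 2 ≤ p := hS p (Finset.mem_insert_self p S)
      have hSrest : ∀ q ∈ S, 2 ≤ q := fun q hq' => hS q (Finset.mem_insert_of_mem hq')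
      have hpR : (2 : ℝ) ≤ (p : ℝ) := by exact_mod_cast hp2
      -- recursion identity
      have hrec : Z m (insert p S) = ((p : ℂ) - 1) * Z m S
          - ∑ j ∈ Icc 1 (p - 1), Z (m + j * (N / p)) S := by
        simp only [hZdef]
        have hpt : ∀ x : F, (Λ ^ m) x *
            ((∏ q ∈ insert p S, (((q : ℂ) - 1) - ∑ j ∈ Icc 1 (q - 1), (Λ ^ (j * (N / q))) x))
              * W x)
            = ((p : ℂ) - 1) * ((Λ ^ m) x *
                ((∏ q ∈ S, (((q : ℂ) - 1) - ∑ j ∈ Icc 1 (q - 1), (Λ ^ (j * (N / q))) x)) * W x))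
              - ∑ j ∈ Icc 1 (p - 1), (Λ ^ (m + j * (N / p))) x *
                ((∏ q ∈ S, (((q : ℂ) - 1) - ∑ j ∈ Icc 1 (q - 1), (Λ ^ (j * (N / q))) x)) * W x) := by
          intro x
          rw [Finset.prod_insert hpS]
          simp only [pow_add, MulChar.mul_apply]
          rw [show ∑ j ∈ Icc 1 (p - 1), (Λ ^ m) x * (Λ ^ (j * (N / p))) x *
              ((∏ q ∈ S, (((q : ℂ) - 1) - ∑ j ∈ Icc 1 (q - 1), (Λ ^ (j * (N / q))) x)) * W x)
              = (∑ j ∈ Icc 1 (p - 1), (Λ ^ (j * (N / p))) x) * ((Λ ^ m) x *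
                ((∏ q ∈ S, (((q : ℂ) - 1) - ∑ j ∈ Icc 1 (q - 1), (Λ ^ (j * (N / q))) x)) * W x))
            from by rw [Finset.sum_mul]; exact Finset.sum_congr rfl (fun j _ => by ring)]
          ring
        rw [Finset.sum_congr rfl (fun x _ => hpt x), Finset.sum_sub_distrib,
          ← Finset.mul_sum, Finset.sum_comm]
      -- estimate
      have hb1 := ih hSrest m
      have hcard : (Icc 1 (p - 1)).card = p - 1 := by rw [Nat.card_Icc]; omega
      have hnormp : ‖((p : ℂ) - 1)‖ = (p : ℝ) - 1 := by
        have h1 : ((p : ℂ) - 1) = (((p : ℝ) - 1 : ℝ) : ℂ) := by push_cast; ring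
        rw [h1, Complex.norm_real]
        exact abs_of_nonneg (by linarith)
      set B := (∏ q ∈ S, (2 * ((q : ℝ) - 1))) * 2 ^ (r + 1) with hBdef
      have hBnn : 0 ≤ B := by
        apply mul_nonneg _ (by positivity)
        apply Finset.prod_nonneg
        intro q hq'
        have : (2:ℝ) ≤ (q:ℝ) := by exact_mod_cast hSrest q hq'
        linarith
      have hsumb : ‖∑ j ∈ Icc 1 (p - 1), Z (m + j * (N / p)) S‖ ≤ ((p : ℝ) - 1) * B := by
        calc ‖∑ j ∈ Icc 1 (p - 1), Z (m + j * (N / p)) S‖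
            ≤ ∑ j ∈ Icc 1 (p - 1), ‖Z (m + j * (N / p)) S‖ := norm_sum_le _ _
          _ ≤ ∑ _j ∈ Icc 1 (p - 1), B := Finset.sum_le_sum (fun j _ => ih hSrest _)
          _ = ((p : ℕ) - 1 : ℕ) * B := by rw [Finset.sum_const, hcard, nsmul_eq_mul]
          _ = ((p : ℝ) - 1) * B := by
              have : (((p : ℕ) - 1 : ℕ) : ℝ) = (p : ℝ) - 1 := by
                have : 1 ≤ p := by omega
                push_cast [this]; ring
              rw [this]
      calc ‖Z m (insert p S)‖
          = ‖((p : ℂ) - 1) * Z m S - ∑ j ∈ Icc 1 (p - 1), Z (m + j * (N / p)) S‖ := by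
            rw [hrec]
        _ ≤ ‖((p : ℂ) - 1) * Z m S‖ + ‖∑ j ∈ Icc 1 (p - 1), Z (m + j * (N / p)) S‖ :=
            norm_sub_le _ _
        _ ≤ ((p : ℝ) - 1) * B + ((p : ℝ) - 1) * B := by
            apply add_le_add _ hsumb
            rw [norm_mul, hnormp]
            apply mul_le_mul_of_nonneg_left hb1 (by linarith)
        _ = (2 * ((p : ℝ) - 1)) * B := by ring
        _ = (∏ q ∈ insert p S, (2 * ((q : ℝ) - 1))) * 2 ^ (r + 1) := by
            rw [Finset.prod_insert hpS, hBdef]; ring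
  -- nonvanishing of x^2 + x
  have hyne : ∀ x : F, x ≠ 0 → x ≠ 1 → x ^ 2 + x ≠ 0 := by
    intro x hx0 hx1 h
    have hfac : x * (x + 1) = 0 := by linear_combination h
    rcases mul_eq_zero.mp hfac with h' | h'
    · exact hx0 h'
    · apply hx1
      have hx : x = -1 := eq_neg_of_add_eq_zero_left h'
      rw [hx, CharTwo.neg_eq]
  set P := N.primeFactors with hPdef
  set RR := ∏ p ∈ P, p with hRdef
  set Pi := ∏ p ∈ P, (p - 1) with hPidef
  -- pointwise evaluation of the sieve weight
  have hx_pt : ∀ x : F, (Λ ^ 0) x *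
      ((∏ p ∈ P, (((p : ℂ) - 1) - ∑ j ∈ Icc 1 (p - 1), (Λ ^ (j * (N / p))) x)) * W x)
      = if orderOf x = N then 2 * (RR : ℂ) else 0 := by
    intro x
    rcases eq_or_ne x 0 with rfl | hx0
    · rw [pow_zero, MulChar.map_nonunit 1 not_isUnit_zero, if_neg, zero_mul]
      intro h
      have h1 := pow_orderOf_eq_one (0 : F)
      rw [h, zero_pow hN0] at h1
      exact zero_ne_one h1
    · have hxu : IsUnit x := isUnit_iff_ne_zero.mpr hx0
      obtain ⟨k, hk⟩ := (Submonoid.mem_powers_iff hxu.unit g).mp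
        ((isOfFinOrder_of_finite g).mem_powers_iff_mem_zpowers.mpr (hg hxu.unit))
      have hxgk : x = ↑(g ^ k) := by rw [hk, IsUnit.unit_spec]
      have hΛe : ∀ e : ℕ, e ≠ 0 → (Λ ^ e) x = z ^ (k * e) := by
        intro e he
        rw [MulChar.pow_apply' Λ he, hxgk, Units.val_pow_eq_pow_val, map_pow, ← pow_mul]
      have horder : orderOf x = N ↔ Nat.gcd N k = 1 := by
        rw [hxgk, orderOf_units, orderOf_pow, hgord]
        constructor
        · intro h
          rcases (Nat.div_eq_self.mp h) with h' | h'
          · omega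
          · exact h'
        · intro h; rw [h, Nat.div_one]
      have hfactor : ∀ p ∈ P, (((p : ℂ) - 1) - ∑ j ∈ Icc 1 (p - 1), (Λ ^ (j * (N / p))) x)
          = if p ∣ k then 0 else (p : ℂ) := by
        intro p hp
        have hpp : p.Prime := Nat.prime_of_mem_primeFactors hp
        have hpN : p ∣ N := Nat.dvd_of_mem_primeFactors hp
        have hNp0 : N / p ≠ 0 := by
          have := Nat.div_pos (Nat.le_of_dvd (by omega) hpN) hpp.pos
          omega
        have hcardI : (Icc 1 (p - 1)).card = p - 1 := by rw [Nat.card_Icc]; omega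
        have hinner : ∀ j ∈ Icc 1 (p - 1), (Λ ^ (j * (N / p))) x = (z ^ (k * (N / p))) ^ j := by
          intro j hj
          have hj1 : 1 ≤ j := (Finset.mem_Icc.mp hj).1
          rw [hΛe (j * (N / p)) (by positivity), ← pow_mul]
          congr 1
          ring
        rw [Finset.sum_congr rfl hinner]
        by_cases hpk : p ∣ k
        · rw [if_pos hpk]
          have hη : z ^ (k * (N / p)) = 1 := by
            obtain ⟨k', rfl⟩ := hpk
            rw [show p * k' * (N / p) = p * (N / p) * k' from by ring, Nat.mul_div_cancel' hpN,
              pow_mul, hz.pow_eq_one, one_pow]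
          simp only [hη, one_pow]
          rw [Finset.sum_const, hcardI, nsmul_eq_mul, mul_one]
          have hp1 : 1 ≤ p := hpp.one_lt.le
          have : ((p - 1 : ℕ) : ℂ) = (p : ℂ) - 1 := by push_cast [hp1]; ring
          rw [this, sub_self]
        · rw [if_neg hpk]
          set η := z ^ (k * (N / p)) with hηdef
          have hηp : η ^ p = 1 := by
            rw [hηdef, ← pow_mul, show k * (N / p) * p = N * k from by
              rw [mul_assoc, Nat.div_mul_cancel hpN]; ring, pow_mul, hz.pow_eq_one, one_pow]
          have hη1 : η ≠ 1 := by
            intro h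
            obtain ⟨t, ht⟩ := (hz.pow_eq_one_iff_dvd _).mp h
            have hNpp : p * (N / p) = N := Nat.mul_div_cancel' hpN
            have heq : k * (N / p) = p * t * (N / p) := by
              rw [ht]
              conv_lhs => rw [← hNpp]
              ring
            have hk' : k = p * t := Nat.eq_of_mul_eq_mul_right (Nat.pos_of_ne_zero hNp0) heq
            exact hpk ⟨t, hk'⟩
          have hgeom : ∑ j ∈ range p, η ^ j = 0 := by
            rw [geom_sum_eq hη1, hηp, sub_self, zero_div]
          have hrange : range p = insert 0 (Icc 1 (p - 1)) := by
            ext j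
            simp only [Finset.mem_range, Finset.mem_insert, Finset.mem_Icc]
            have := hpp.two_le
            omega
          rw [hrange, Finset.sum_insert (by simp)] at hgeom
          rw [pow_zero] at hgeom
          have hsum : ∑ j ∈ Icc 1 (p - 1), η ^ j = -1 := by linear_combination hgeom
          rw [hsum]
          ring
      by_cases hord : orderOf x = N
      · rw [if_pos hord]
        have hk1 : Nat.gcd N k = 1 := horder.mp hord
        have hfac' : ∀ p ∈ P,
            (((p : ℂ) - 1) - ∑ j ∈ Icc 1 (p - 1), (Λ ^ (j * (N / p))) x) = (p : ℂ) := by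
          intro p hp
          rw [hfactor p hp, if_neg]
          intro hpk
          have hpp := Nat.prime_of_mem_primeFactors hp
          have hd : p ∣ Nat.gcd N k := Nat.dvd_gcd (Nat.dvd_of_mem_primeFactors hp) hpk
          rw [hk1] at hd
          exact hpp.one_lt.ne' (Nat.dvd_one.mp hd)
        rw [Finset.prod_congr rfl hfac']
        have hx1 : x ≠ 1 := by
          intro h; rw [h, orderOf_one] at hord; omega
        have hWx : W x = 2 := by
          simp only [hWdef]
          rw [hcval _ (hyne x hx0 hx1) (hcon x hord)]
          norm_num
        have h1x : (Λ ^ 0) x = 1 := by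
          rw [pow_zero, ← hxu.unit_spec, MulChar.one_apply_coe]
        rw [hWx, h1x, show (∏ p ∈ P, (p : ℂ)) = ((RR : ℕ) : ℂ) from by
          rw [hRdef]; push_cast; rfl]
        ring
      · rw [if_neg hord]
        have hgcd : ¬ Nat.gcd N k = 1 := fun h => hord (horder.mpr h)
        obtain ⟨p, hpp, hpd⟩ := Nat.exists_prime_and_dvd hgcd
        have hpN : p ∣ N := hpd.trans (Nat.gcd_dvd_left N k)
        have hpk : p ∣ k := hpd.trans (Nat.gcd_dvd_right N k)
        have hpP : p ∈ P := Nat.mem_primeFactors.mpr ⟨hpp, hpN, hN0⟩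
        rw [Finset.prod_eq_zero hpP (by rw [hfactor p hpP, if_pos hpk])]
        ring
  -- counting primitive elements
  have hcount : (univ.filter (fun x : F => orderOf x = N)).card = N.totient := by
    have hU := IsCyclic.card_orderOf_eq_totient (α := Fˣ) (d := N) (by rw [hcardU])
    rw [← hU]
    symm
    apply Finset.card_bij (fun (u : Fˣ) _ => (u : F))
    · intro u hu
      simp only [Finset.mem_filter, Finset.mem_univ, true_and] at hu ⊢
      rw [orderOf_units]; exact hu
    · intro u _ v _ h
      exact Units.ext h
    · intro x hx
      simp only [Finset.mem_filter, Finset.mem_univ, true_and] at hx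
      have hx0 : x ≠ 0 := by
        rintro rfl
        have h1 := pow_orderOf_eq_one (0 : F)
        rw [hx, zero_pow hN0] at h1
        exact zero_ne_one h1
      refine ⟨(isUnit_iff_ne_zero.mpr hx0).unit, ?_, (IsUnit.unit_spec _)⟩
      simp only [Finset.mem_filter, Finset.mem_univ, true_and]
      rw [← orderOf_units, IsUnit.unit_spec]
      exact hx
  -- main equality
  have hZmain : Z 0 P = 2 * (RR : ℂ) * (N.totient : ℂ) := by
    simp only [hZdef]
    rw [Finset.sum_congr rfl (fun x _ => hx_pt x), Finset.sum_ite, Finset.sum_const,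
      Finset.sum_const_zero, add_zero, hcount, nsmul_eq_mul]
    push_cast
    ring
  -- Final contradiction, in two cases
  rcases Nat.lt_or_ge r 3 with hrlt | hr3
  · -- r = 2 : direct count
    have hr2' : r = 2 := by omega
    set A := univ.filter (fun x : F => ¬(x = 0 ∨ x = 1) ∧ (x ^ 2 + x) ^ M = 1) with hAdef
    have hWpt : ∀ x : F, W x
        = (if ¬(x = 0 ∨ x = 1) ∧ (x ^ 2 + x) ^ M = 1 then (3 : ℂ) else 0)
          + (if x = 0 ∨ x = 1 then (1 : ℂ) else 0) - 1 := by
      intro x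
      by_cases h01 : x = 0 ∨ x = 1
      · rw [if_neg (by tauto), if_pos h01]
        have hy : x ^ 2 + x = 0 := by
          rcases h01 with rfl | rfl
          · ring
          · have h2 := CharTwo.add_self_eq_zero (1 : F)
            calc (1:F) ^ 2 + 1 = 1 + 1 := by ring
              _ = 0 := h2
        simp only [hWdef]
        rw [hy, MulChar.map_nonunit c not_isUnit_zero]
        norm_num
      · push_neg at h01
        have hy0 : x ^ 2 + x ≠ 0 := hyne x h01.1 h01.2
        by_cases hM1 : (x ^ 2 + x) ^ M = 1
        · rw [if_pos ⟨by tauto, hM1⟩, if_neg (by tauto)]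
          simp only [hWdef]
          rw [hcval _ hy0 hM1]
          norm_num
        · rw [if_neg (by tauto), if_neg (by tauto)]
          simp only [hWdef]
          have h := hcval2 _ hy0 hM1
          linear_combination h
    have hfilter01 : univ.filter (fun x : F => x = 0 ∨ x = 1) = {0, 1} := by
      ext x
      simp [Finset.mem_insert]
    have hsumW : ∑ x : F, W x = 3 * (A.card : ℂ) + 2 - ((2 : ℂ) ^ (2 * r)) := by
      rw [Finset.sum_congr rfl (fun x _ => hWpt x)]
      rw [Finset.sum_sub_distrib, Finset.sum_add_distrib, Finset.sum_ite, Finset.sum_ite]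
      simp only [Finset.sum_const, Finset.sum_const_zero, add_zero, nsmul_eq_mul, mul_one,
        Finset.card_univ, hq, hfilter01]
      rw [Finset.card_pair (zero_ne_one), ← hAdef]
      push_cast
      ring
    have hWsum_eq : ∑ x : F, W x = ∑ x : F, (Λ ^ 0) x * W x := by
      apply Finset.sum_congr rfl
      intro x _
      rcases eq_or_ne x 0 with rfl | hx0
      · have hW0 : W 0 = 0 := by
          simp only [hWdef]
          rw [show (0 : F) ^ 2 + 0 = 0 from by ring, MulChar.map_nonunit c not_isUnit_zero]
          ring
        rw [hW0]
        ring
      · have h1x : (Λ ^ 0) x = 1 := by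
          rw [pow_zero, ← (isUnit_iff_ne_zero.mpr hx0).unit_spec, MulChar.one_apply_coe]
        rw [h1x, one_mul]
    have hbound := hbasebound 0
    rw [← hWsum_eq, hsumW] at hbound
    have hcast : (3 * (A.card : ℂ) + 2 - ((2 : ℂ) ^ (2 * r)))
        = (((3 * (A.card : ℝ) + 2 - 16 : ℝ)) : ℂ) := by
      rw [hr2']
      push_cast
      ring
    rw [hcast, Complex.norm_real] at hbound
    have h8 : (2 : ℝ) ^ (r + 1) = 8 := by rw [hr2']; norm_num
    rw [h8] at hbound
    have habs := abs_le.mp hbound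
    have hA7 : A.card ≤ 7 := by
      by_contra hA
      push_neg at hA
      have : (8 : ℝ) ≤ (A.card : ℝ) := by exact_mod_cast hA
      linarith [habs.2]
    have hsub : univ.filter (fun x : F => orderOf x = N) ⊆ A := by
      intro x hx
      simp only [Finset.mem_filter, Finset.mem_univ, true_and] at hx
      have hx0 : x ≠ 0 := by
        rintro rfl
        have h1 := pow_orderOf_eq_one (0 : F)
        rw [hx, zero_pow hN0] at h1
        exact zero_ne_one h1
      have hx1 : x ≠ 1 := by
        intro h; rw [h, orderOf_one] at hx; omega
      simp only [hAdef, Finset.mem_filter, Finset.mem_univ, true_and]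
      exact ⟨by tauto, hcon x hx⟩
    have hcards := Finset.card_le_card hsub
    rw [hcount] at hcards
    have htot15 : N.totient = 8 := by
      have : N = 15 := by rw [hNdef, hr2']; norm_num
      rw [this]
      decide
    omega
  · -- r ≥ 3 : the sieve bound
    have hb := hZbound P (fun p hp => (Nat.prime_of_mem_primeFactors hp).two_le) 0
    have hnorm : ‖Z 0 P‖ = ((2 * RR * N.totient : ℕ) : ℝ) := by
      rw [hZmain, show (2 * (RR : ℂ) * (N.totient : ℂ)) = (((2 * RR * N.totient : ℕ) : ℂ)) from by
        push_cast; ring, Complex.norm_natCast]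
    rw [hnorm] at hb
    have hprodR : (∏ p ∈ P, (2 * ((p : ℝ) - 1))) = 2 ^ P.card * ((Pi : ℕ) : ℝ) := by
      rw [Finset.prod_mul_distrib, Finset.prod_const]
      congr 1
      rw [hPidef]
      push_cast
      apply Finset.prod_congr rfl
      intro p hp
      have h1 : 1 ≤ p := (Nat.prime_of_mem_primeFactors hp).one_lt.le
      push_cast [h1]
      ring
    rw [hprodR] at hb
    -- convert to ℕ
    have hbn : (2 * RR * N.totient : ℕ) ≤ 2 ^ (P.card + r + 1) * Pi := by
      have h2 : ((2 ^ (P.card + r + 1) * Pi : ℕ) : ℝ)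
          = 2 ^ P.card * ((Pi : ℕ) : ℝ) * 2 ^ (r + 1) := by
        push_cast
        ring
      exact_mod_cast hb.trans (le_of_eq h2.symm)
    have htot : N.totient * RR = N * Pi := Nat.totient_mul_prod_primeFactors N
    have hPi1 : 1 ≤ Pi := by
      rw [hPidef]
      apply Finset.one_le_prod'
      intro p hp
      have := (Nat.prime_of_mem_primeFactors hp).two_le
      omega
    have hNle : N ≤ 2 ^ (P.card + r) := by
      have h1 : 2 * (N * Pi) ≤ 2 ^ (P.card + r + 1) * Pi := by
        calc 2 * (N * Pi) = 2 * (N.totient * RR) := by rw [htot]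
          _ = 2 * RR * N.totient := by ring
          _ ≤ 2 ^ (P.card + r + 1) * Pi := hbn
      have h2 : 2 ^ (P.card + r + 1) = 2 * 2 ^ (P.card + r) := by
        rw [pow_succ]; ring
      rw [h2] at h1
      have h3 : N * Pi ≤ 2 ^ (P.card + r) * Pi := by
        nlinarith
      exact Nat.le_of_mul_le_mul_right h3 (by omega)
    have hω : P.card < r := omega_lt r hr3
    have hle : 2 ^ (P.card + r) ≤ 2 ^ (2 * r - 1) :=
      Nat.pow_le_pow_right (by norm_num) (by omega)
    have h2r1 : (2 : ℕ) ^ (2 * r) = 2 * 2 ^ (2 * r - 1) := by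
      rw [← pow_succ']
      congr 1
      omega
    omega

end Key

theorem stmt_9 (r : ℕ) (hr : 2 ≤ r) :
    ∃ α : GaloisField 2 (2 * r), IsPrimitiveRoot α (2 ^ (2 * r) - 1) ∧
      ∃ ℓ : ℕ, ℓ % 3 ≠ 2 ∧ α ^ ℓ = 1 + α := by
  have h2r0 : 2 * r ≠ 0 := by omega
  haveI : Fintype (GaloisField 2 (2 * r)) := Fintype.ofFinite _
  haveI : DecidableEq (GaloisField 2 (2 * r)) := Classical.decEq _
  have hq : Fintype.card (GaloisField 2 (2 * r)) = 2 ^ (2 * r) := by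
    rw [← Nat.card_eq_fintype_card]
    exact GaloisField.card 2 (2 * r) h2r0
  obtain ⟨x, hx, hxM⟩ := key_exists r hr hq
  set N := 2 ^ (2 * r) - 1 with hNdef
  have hN15 : 15 ≤ N := by
    have h := Nat.pow_le_pow_right (show 1 ≤ 2 by norm_num) (show 4 ≤ 2 * r by omega)
    have h16 : (2:ℕ) ^ 4 = 16 := by norm_num
    omega
  have hN0 : N ≠ 0 := by omega
  have hM3 : 3 * (N / 3) = N := Nat.mul_div_cancel' (by
    have h49 : (2:ℕ) ^ (2 * r) = 4 ^ r := by rw [pow_mul]; norm_num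
    have hd := Nat.sub_dvd_pow_sub_pow 4 1 r
    simp only [one_pow] at hd
    rw [hNdef, h49]; exact hd)
  have hx0 : x ≠ 0 := by
    rintro rfl
    have h1 := pow_orderOf_eq_one (0 : GaloisField 2 (2 * r))
    rw [hx, zero_pow hN0] at h1
    exact zero_ne_one h1
  have hx1 : x ≠ 1 := by
    intro h; rw [h, orderOf_one] at hx; omega
  have hxplus : (1 : GaloisField 2 (2 * r)) + x ≠ 0 := by
    intro h
    apply hx1
    have hneg : x = -1 := eq_neg_of_add_eq_zero_right h
    rw [hneg, CharTwo.neg_eq]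
  set u : (GaloisField 2 (2 * r))ˣ := (isUnit_iff_ne_zero.mpr hx0).unit with hu
  have hux : (u : GaloisField 2 (2 * r)) = x := IsUnit.unit_spec _
  have huord : orderOf u = N := by rw [← orderOf_units, hux]; exact hx
  have hgen : ∀ w : (GaloisField 2 (2 * r))ˣ, ∃ k : ℕ, u ^ k = w := by
    intro w
    have htop : Subgroup.zpowers u = ⊤ := by
      apply Subgroup.eq_top_of_card_eq
      rw [Nat.card_zpowers, huord, Nat.card_eq_fintype_card, Fintype.card_units, hq]
    have hw : w ∈ Subgroup.zpowers u := by rw [htop]; trivial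
    exact (Submonoid.mem_powers_iff w u).mp
      ((isOfFinOrder_of_finite u).mem_powers_iff_mem_zpowers.mpr hw)
  obtain ⟨ℓ, hℓ⟩ := hgen ((isUnit_iff_ne_zero.mpr hxplus).unit)
  have hℓval : x ^ ℓ = 1 + x := by
    have hv := congrArg (Units.val) hℓ
    rwa [Units.val_pow_eq_pow_val, hux, IsUnit.unit_spec] at hv
  refine ⟨x, ⟨?_, ?_⟩, ℓ, ?_, hℓval⟩
  · rw [← hx]; exact pow_orderOf_eq_one x
  · intro l hl; rw [← hx]; exact orderOf_dvd_of_pow_eq_one hl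
  · intro hmod
    apply hxM
    have h3 : 3 ∣ ℓ + 1 := by omega
    obtain ⟨t, ht⟩ := h3
    have hx2 : x ^ 2 + x = x ^ (ℓ + 1) := by
      calc x ^ 2 + x = x * (1 + x) := by ring
        _ = x * x ^ ℓ := by rw [hℓval]
        _ = x ^ (ℓ + 1) := by ring
    have hxN : x ^ N = 1 := by rw [← hx]; exact pow_orderOf_eq_one x
    rw [hx2, ← pow_mul, ht,
      show 3 * t * (N / 3) = N * t from by
          conv_rhs => rw [← hM3]
          ring
        , pow_mul, hxN, one_pow]
end
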